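/- arXiv:1810.13396 — 6 statements merged into one kernel-verified Lean document; each statement's English description precedes it below -/
import Mathlib

section
/- If a vector a ∈ ℝ^8 is self-aligned, then there exists a special unitary 3×3 matrix U such that the rotated vector a′ with components a′_i = Tr(U·A·U†·t_i), where A = 2·Σ_i a_i t_i, satisfies a′_i = 0 for all i ∈ {1,…,7} (i.e., in a suitable SU(3) Higgs basis the vector a is aligned with the x8 direction). -/
open Matrix Complex BigOperators

noncomputable section

/-- The standard Gell-Mann matrices `λ₁,…,λ₈` (indexed by `Fin 8`). -/
def gm : Fin 8 → Matrix (Fin 3) (Fin 3) ℂ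
  | 0 => !![0, 1, 0; 1, 0, 0; 0, 0, 0]
  | 1 => !![0, -I, 0; I, 0, 0; 0, 0, 0]
  | 2 => !![1, 0, 0; 0, -1, 0; 0, 0, 0]
  | 3 => !![0, 0, 1; 0, 0, 0; 1, 0, 0]
  | 4 => !![0, 0, -I; 0, 0, 0; I, 0, 0]
  | 5 => !![0, 0, 0; 0, 0, 1; 0, 1, 0]
  | 6 => !![0, 0, 0; 0, 0, -I; 0, I, 0]
  | 7 => ((Real.sqrt 3 : ℂ))⁻¹ • !![1, 0, 0; 0, 1, 0; 0, 0, -2]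

/-- `t_i = λ_i / 2`. -/
def tm (i : Fin 8) : Matrix (Fin 3) (Fin 3) ℂ := (2 : ℂ)⁻¹ • gm i

/-- The real totally antisymmetric tensor `f_{ijk} = -2i · Tr([t_i,t_j]·t_k)`. -/
def fT (i j k : Fin 8) : ℝ := ((-2 * I) * ((tm i * tm j - tm j * tm i) * tm k).trace).re

/-- The real totally symmetric tensor `d_{ijk} = 2 · Tr({t_i,t_j}·t_k)`. -/
def dT (i j k : Fin 8) : ℝ := ((2 : ℂ) * ((tm i * tm j + tm j * tm i) * tm k).trace).re

/-- Hermitian inner product on `ℂ²`. -/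
def ip (x y : Fin 2 → ℂ) : ℂ := ∑ α, (starRingEnd ℂ) (x α) * y α

/-- The bilinear `r₀(φ) = (1/√3) Σ_a ⟨φ_a, φ_a⟩`. -/
def r0 (φ : Fin 3 → Fin 2 → ℂ) : ℝ := (Real.sqrt 3)⁻¹ * (∑ a, ip (φ a) (φ a)).re

/-- The bilinears `r_i(φ) = Σ_{a,b} (t_i)_{ab} ⟨φ_a, φ_b⟩`, `i = 1,…,8`. -/
def rv (i : Fin 8) (φ : Fin 3 → Fin 2 → ℂ) : ℝ := (∑ a, ∑ b, tm i a b * ip (φ a) (φ b)).re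

/-- The general 3HDM scalar potential in the bilinear formalism. -/
def pot (M0 Λ0 : ℝ) (M L : Fin 8 → ℝ) (Λ : Matrix (Fin 8) (Fin 8) ℝ)
    (φ : Fin 3 → Fin 2 → ℂ) : ℝ :=
  M0 * r0 φ + (∑ i, M i * rv i φ) + Λ0 * (r0 φ) ^ 2 + (∑ i, L i * r0 φ * rv i φ)
    + ∑ i, ∑ j, Λ i j * rv i φ * rv j φ

/-- `V` admits a CP symmetry of order 4: a unitary `X` with `X·conj X ≠ 1`,
`(X·conj X)² = 1` and `V(X·conj φ) = V(φ)` for all `φ`. -/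
def HasCP4 (M0 Λ0 : ℝ) (M L : Fin 8 → ℝ) (Λ : Matrix (Fin 8) (Fin 8) ℝ) : Prop :=
  ∃ X : Matrix (Fin 3) (Fin 3) ℂ, X * Xᴴ = 1 ∧
    X * X.map (starRingEnd ℂ) ≠ 1 ∧ (X * X.map (starRingEnd ℂ)) ^ 2 = 1 ∧
    ∀ φ : Fin 3 → Fin 2 → ℂ,
      pot M0 Λ0 M L Λ (fun a α => ∑ b, X a b * (starRingEnd ℂ) (φ b α)) = pot M0 Λ0 M L Λ φ

/-- `K⁽ⁿ⁾_i = Σ_{j,k} d_{ijk} (Λⁿ)_{jk}`. -/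
def Kvec (Λ : Matrix (Fin 8) (Fin 8) ℝ) (n : ℕ) : Fin 8 → ℝ :=
  fun i => ∑ j, ∑ k, dT i j k * (Λ ^ n) j k

/-- The star product `(a∗b)_i = √3 Σ_{j,k} d_{ijk} a_j b_k`. -/
def starP (a b : Fin 8 → ℝ) : Fin 8 → ℝ :=
  fun i => Real.sqrt 3 * ∑ j, ∑ k, dT i j k * a j * b k

/-- A vector `v ∈ ℝ⁸` is self-aligned if `√3 Σ_{j,k} d_{ijk} v_j v_k` is a real
scalar multiple of `v`. -/
def SelfAligned (v : Fin 8 → ℝ) : Prop :=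
  ∃ c : ℝ, (fun i => Real.sqrt 3 * ∑ j, ∑ k, dT i j k * v j * v k) = c • v

/-- `u, v ∈ ℝ⁸` are f-orthogonal if `Σ_{j,k} f_{ijk} u_j v_k = 0` for all `i`. -/
def FOrth (u v : Fin 8 → ℝ) : Prop := ∀ i : Fin 8, ∑ j, ∑ k, fT i j k * u j * v k = 0

/-- The canonical order-4 CP matrix `X = [[0,1,0],[-1,0,0],[0,0,1]]`. -/
def Xcp4 : Matrix (Fin 3) (Fin 3) ℂ := !![0, 1, 0; -1, 0, 0; 0, 0, 1]

/-! ### Auxiliary lemmas -/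

set_option maxHeartbeats 2000000

/-- Gell-Mann matrices with an abstract normalization `s` in the eighth slot. -/
def gmS (s : ℂ) : Fin 8 → Matrix (Fin 3) (Fin 3) ℂ
  | 0 => !![0, 1, 0; 1, 0, 0; 0, 0, 0]
  | 1 => !![0, -I, 0; I, 0, 0; 0, 0, 0]
  | 2 => !![1, 0, 0; 0, -1, 0; 0, 0, 0]
  | 3 => !![0, 0, 1; 0, 0, 0; 1, 0, 0]
  | 4 => !![0, 0, -I; 0, 0, 0; I, 0, 0]
  | 5 => !![0, 0, 0; 0, 0, 1; 0, 1, 0]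
  | 6 => !![0, 0, 0; 0, 0, -I; 0, I, 0]
  | 7 => s • !![1, 0, 0; 0, 1, 0; 0, 0, -2]

def tmS (s : ℂ) (i : Fin 8) : Matrix (Fin 3) (Fin 3) ℂ := (2 : ℂ)⁻¹ • gmS s i

lemma tm_eq_tmS : tm = tmS ((Real.sqrt 3 : ℂ))⁻¹ := by
  funext i
  fin_cases i <;> rfl

lemma completenessS (s : ℂ) (hs : s * s = 3⁻¹) (M : Matrix (Fin 3) (Fin 3) ℂ) :
    M = (3:ℂ)⁻¹ • M.trace • (1 : Matrix (Fin 3) (Fin 3) ℂ)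
      + (2:ℂ) • ∑ i, ((M * tmS s i).trace) • tmS s i := by
  ext r c
  fin_cases r <;> fin_cases c <;>
    · simp only [show (⟨2, by omega⟩ : Fin 3) = 2 from rfl,
        show (⟨1, by omega⟩ : Fin 3) = 1 from rfl, show (⟨0, by omega⟩ : Fin 3) = 0 from rfl]
      simp only [Matrix.add_apply, Matrix.smul_apply, Matrix.sum_apply, Fin.sum_univ_eight,
        tmS, gmS, trace_fin_three, mul_apply, Fin.sum_univ_three, Matrix.one_apply]
      norm_num [vecHead, vecTail, Matrix.cons_val_two, Matrix.one_apply, show ((0:Fin 3) ≠ 2) by decide,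
        show ((1:Fin 3) ≠ 2) by decide, show ((2:Fin 3) ≠ 0) by decide,
        show ((2:Fin 3) ≠ 1) by decide, show ((0:Fin 3) ≠ 1) by decide,
        show ((1:Fin 3) ≠ 0) by decide]
      try ring
      try linear_combination (-(M 0 0 + M 1 1 - 2*M 2 2)/2) * hs
      try linear_combination ((M 0 0 + M 1 1 - 2*M 2 2)) * hs
      try linear_combination ((M 0 1 - M 1 0)/2) * Complex.I_mul_I
      try linear_combination ((M 1 0 - M 0 1)/2) * Complex.I_mul_I
      try linear_combination ((M 0 2 - M 2 0)/2) * Complex.I_mul_I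
      try linear_combination ((M 2 0 - M 0 2)/2) * Complex.I_mul_I
      try linear_combination ((M 1 2 - M 2 1)/2) * Complex.I_mul_I
      try linear_combination ((M 2 1 - M 1 2)/2) * Complex.I_mul_I

lemma completeness (M : Matrix (Fin 3) (Fin 3) ℂ) :
    M = (3:ℂ)⁻¹ • M.trace • (1 : Matrix (Fin 3) (Fin 3) ℂ)
      + (2:ℂ) • ∑ i, ((M * tm i).trace) • tm i := by
  rw [tm_eq_tmS]
  refine completenessS _ ?_ M
  rw [← mul_inv, ← Complex.ofReal_mul, Real.mul_self_sqrt (by norm_num)]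
  norm_num

lemma tm_herm (i : Fin 8) : (tm i)ᴴ = tm i := by
  fin_cases i <;>
    · ext r c
      fin_cases r <;> fin_cases c <;>
        · simp [tm, gm, conjTranspose_apply, vecHead, vecTail]

lemma sum_dT (a : Fin 8 → ℝ) (i : Fin 8) :
    (∑ j, ∑ k, dT i j k * a j * a k : ℝ)
      = ((((2:ℂ) • ∑ j, (a j : ℂ) • tm j) * ((2:ℂ) • ∑ j, (a j : ℂ) • tm j)) * tm i).trace.re := by
  set S1 : ℂ := ∑ j, ∑ k, 2 * (a j : ℂ) * (a k : ℂ) * (tm j * tm k * tm i).trace with hS1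
  have hswap : (∑ j, ∑ k, 2 * (a j : ℂ) * (a k : ℂ) * (tm k * tm j * tm i).trace) = S1 := by
    rw [Finset.sum_comm, hS1]
    exact Finset.sum_congr rfl fun j _ => Finset.sum_congr rfl fun k _ => by ring
  have key : (∑ j, ∑ k, ((2:ℂ) * ((tm i * tm j + tm j * tm i) * tm k).trace) * (a j : ℂ) * (a k : ℂ))
      = ((((2:ℂ) • ∑ j, (a j : ℂ) • tm j) * ((2:ℂ) • ∑ j, (a j : ℂ) • tm j)) * tm i).trace := by
    have hL : (∑ j, ∑ k, ((2:ℂ) * ((tm i * tm j + tm j * tm i) * tm k).trace) * (a j : ℂ) * (a k : ℂ))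
        = S1 + S1 := by
      nth_rewrite 2 [← hswap]
      rw [hS1, ← Finset.sum_add_distrib]
      refine Finset.sum_congr rfl fun j _ => ?_
      rw [← Finset.sum_add_distrib]
      refine Finset.sum_congr rfl fun k _ => ?_
      rw [Matrix.add_mul, trace_add, trace_mul_cycle (tm i) (tm j) (tm k),
        trace_mul_cycle (tm k) (tm i) (tm j), trace_mul_cycle (tm j) (tm i) (tm k)]
      ring
    have hR : ((((2:ℂ) • ∑ j, (a j : ℂ) • tm j) * ((2:ℂ) • ∑ j, (a j : ℂ) • tm j)) * tm i).trace
        = S1 + S1 := by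
      rw [← hswap]
      simp only [Matrix.smul_mul, Matrix.mul_smul, Matrix.sum_mul, Matrix.mul_sum,
        trace_smul, trace_sum, Finset.smul_sum, smul_smul, smul_eq_mul,
        ← Finset.sum_add_distrib]
      refine Finset.sum_congr rfl fun j _ => ?_
      refine Finset.sum_congr rfl fun k _ => ?_
      ring
    rw [hL, hR]
  calc (∑ j, ∑ k, dT i j k * a j * a k : ℝ)
      = (∑ j, ∑ k, ((2:ℂ) * ((tm i * tm j + tm j * tm i) * tm k).trace) * (a j : ℂ) * (a k : ℂ)).re := by
        rw [Complex.re_sum]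
        refine Finset.sum_congr rfl fun j _ => ?_
        rw [Complex.re_sum]
        refine Finset.sum_congr rfl fun k _ => ?_
        simp [dT, Complex.mul_re]
    _ = _ := by rw [key]

lemma diag_trace (w : Fin 3 → ℂ) (hw : w 0 = w 1) (i : Fin 8) (hi : i ≠ 7) :
    (diagonal w * tm i).trace = 0 := by
  fin_cases i <;>
    first
    | exact absurd (by decide) hi
    | · simp [tm, gm, trace_fin_three, mul_apply, diagonal, Fin.sum_univ_three,
          vecHead, vecTail]
        try ring
        try linear_combination hw / 2

lemma swap12_diag (v : Fin 3 → ℂ) :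
    !![(1:ℂ),0,0;0,0,1;0,1,0] * diagonal v * !![(1:ℂ),0,0;0,0,1;0,1,0]ᴴ
      = diagonal ![v 0, v 2, v 1] := by
  ext r c
  fin_cases r <;> fin_cases c <;>
    simp [mul_apply, diagonal, Fin.sum_univ_three, vecHead, vecTail, conjTranspose_apply]

lemma swap02_diag (v : Fin 3 → ℂ) :
    !![(0:ℂ),0,1;0,1,0;1,0,0] * diagonal v * !![(0:ℂ),0,1;0,1,0;1,0,0]ᴴ
      = diagonal ![v 2, v 1, v 0] := by
  ext r c
  fin_cases r <;> fin_cases c <;>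
    simp [mul_apply, diagonal, Fin.sum_univ_three, vecHead, vecTail, conjTranspose_apply]

lemma swap12_unit : !![(1:ℂ),0,0;0,0,1;0,1,0] * !![(1:ℂ),0,0;0,0,1;0,1,0]ᴴ = 1 := by
  ext r c
  fin_cases r <;> fin_cases c <;>
    simp [mul_apply, Fin.sum_univ_three, vecHead, vecTail, conjTranspose_apply, Matrix.one_apply]

lemma swap02_unit : !![(0:ℂ),0,1;0,1,0;1,0,0] * !![(0:ℂ),0,1;0,1,0;1,0,0]ᴴ = 1 := by
  ext r c
  fin_cases r <;> fin_cases c <;>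
    simp [mul_apply, Fin.sum_univ_three, vecHead, vecTail, conjTranspose_apply, Matrix.one_apply]

/-- A self-aligned vector `a ∈ ℝ⁸` can be rotated by a special unitary Higgs-basis change
so that only its eighth (`x₈`) component survives: there is `U ∈ SU(3)` with
`Tr(U·A·U†·t_i) = 0` for all `i ∈ {1,…,7}`, where `A = 2 Σ_i a_i t_i`. -/
theorem selfAligned_align_with_x8 (a : Fin 8 → ℝ) (ha : SelfAligned a) :
    ∃ U : Matrix (Fin 3) (Fin 3) ℂ, U ∈ Matrix.specialUnitaryGroup (Fin 3) ℂ ∧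
      ∀ i : Fin 8, i ≠ 7 →
        ((U * ((2 : ℂ) • ∑ j, (a j : ℂ) • tm j) * Uᴴ) * tm i).trace = 0 := by
  obtain ⟨c, hc⟩ := ha
  set A : Matrix (Fin 3) (Fin 3) ℂ := (2:ℂ) • ∑ j, (a j : ℂ) • tm j with hAdef
  -- A is Hermitian
  have hA : A.IsHermitian := by
    show Aᴴ = A
    rw [hAdef]
    simp [Matrix.conjTranspose_smul, Matrix.conjTranspose_sum, tm_herm, Complex.conj_ofReal]
  -- the traces Tr(A² tᵢ) are real
  have hreal : ∀ i, ((A * A) * tm i).trace = ((((A * A) * tm i).trace.re : ℝ) : ℂ) := by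
    intro i
    have h1 : (A * A)ᴴ = A * A := by rw [conjTranspose_mul, hA]
    have h2 : (starRingEnd ℂ) (((A * A) * tm i).trace) = ((A * A) * tm i).trace := by
      have := trace_conjTranspose ((A * A) * tm i)
      rw [conjTranspose_mul, h1, tm_herm, trace_mul_comm] at this
      exact this.symm
    exact (Complex.conj_eq_iff_re.mp h2).symm
  have hsqrt : (Real.sqrt 3) ≠ 0 := by positivity
  -- self-alignment ⇒ Tr(A² tᵢ) = (c/√3) aᵢ
  have htr : ∀ i, ((A * A) * tm i).trace.re = c / Real.sqrt 3 * a i := by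
    intro i
    have h := congrFun hc i
    simp only [Pi.smul_apply, smul_eq_mul] at h
    rw [sum_dT a i] at h
    rw [← hAdef] at h
    field_simp
    linarith [h]
  set β : ℝ := c / Real.sqrt 3 with hβ
  set α : ℂ := (3:ℂ)⁻¹ * (A * A).trace with hα
  -- the quadratic matrix identity
  have hquad : A * A = α • (1 : Matrix (Fin 3) (Fin 3) ℂ) + (β : ℂ) • A := by
    have hcomp := completeness (A * A)
    have hsum : (2:ℂ) • ∑ i, (((A * A) * tm i).trace) • tm i = (β : ℂ) • A := by
      have he : ∀ i : Fin 8, (((A * A) * tm i).trace) • tm i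
          = (β : ℂ) • ((a i : ℂ) • tm i) := by
        intro i
        rw [hreal i, htr i, smul_smul]
        norm_cast
      rw [Finset.sum_congr rfl fun i _ => he i, ← Finset.smul_sum, hAdef, smul_comm]
    rw [hsum, smul_smul, ← hα] at hcomp
    exact hcomp
  -- spectral theorem
  have hD : star (hA.eigenvectorUnitary : Matrix (Fin 3) (Fin 3) ℂ) * A * (hA.eigenvectorUnitary : Matrix (Fin 3) (Fin 3) ℂ)
      = diagonal (RCLike.ofReal ∘ hA.eigenvalues) := by
    have := hA.conjStarAlgAut_star_eigenvectorUnitary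
    rwa [Unitary.conjStarAlgAut_star_apply] at this
  set V : Matrix (Fin 3) (Fin 3) ℂ := (hA.eigenvectorUnitary : Matrix (Fin 3) (Fin 3) ℂ) with hVdef
  set f : Fin 3 → ℂ := (RCLike.ofReal ∘ hA.eigenvalues) with hfdef
  have hVU : V * star V = 1 := mem_unitaryGroup_iff.mp hA.eigenvectorUnitary.2
  have hUV : star V * V = 1 := mem_unitaryGroup_iff'.mp hA.eigenvectorUnitary.2
  -- the diagonal satisfies the quadratic identity
  have hDD : diagonal f * diagonal f
      = α • (1 : Matrix (Fin 3) (Fin 3) ℂ) + (β : ℂ) • diagonal f := by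
    have hcan : ∀ X : Matrix (Fin 3) (Fin 3) ℂ, V * (star V * X) = X := fun X => by
      rw [← Matrix.mul_assoc, hVU, Matrix.one_mul]
    calc diagonal f * diagonal f
        = (star V * A * V) * (star V * A * V) := by rw [hD]
      _ = star V * (A * A) * V := by
          simp only [Matrix.mul_assoc, hcan]
      _ = α • (1 : Matrix (Fin 3) (Fin 3) ℂ) + (β : ℂ) • diagonal f := by
          rw [hquad]
          have hexp : star V * (α • 1 + (β:ℂ) • A) * V
              = α • (star V * V) + (β:ℂ) • (star V * A * V) := by
            simp only [Matrix.mul_add, Matrix.add_mul, Matrix.mul_smul, Matrix.smul_mul,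
              Matrix.mul_one]
          rw [hexp, hUV, hD]
  -- eigenvalue equations
  have heig : ∀ m : Fin 3, f m * f m = α + (β : ℂ) * f m := by
    intro m
    have h := congrFun (congrFun hDD m) m
    rw [diagonal_mul_diagonal] at h
    simpa [diagonal_apply_eq, Matrix.add_apply, Matrix.smul_apply, Matrix.one_apply_eq,
      smul_eq_mul] using h
  have hpair : ∀ m n : Fin 3, f m = f n ∨ f m + f n = (β : ℂ) := by
    intro m n
    have h : (f m - f n) * (f m + f n - (β : ℂ)) = 0 := by
      linear_combination heig m - heig n
    rcases mul_eq_zero.mp h with h' | h'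
    · exact Or.inl (by linear_combination h')
    · exact Or.inr (by linear_combination h')
  -- find a permutation making the first two diagonal entries equal
  obtain ⟨P, w, hPunit, hPdiag, hw⟩ :
      ∃ (P : Matrix (Fin 3) (Fin 3) ℂ) (w : Fin 3 → ℂ),
        P * Pᴴ = 1 ∧ P * diagonal f * Pᴴ = diagonal w ∧ w 0 = w 1 := by
    rcases hpair 0 1 with h01 | h01
    · exact ⟨1, f, by simp, by simp, h01⟩
    · rcases hpair 0 2 with h02 | h02
      · exact ⟨!![(1:ℂ),0,0;0,0,1;0,1,0], ![f 0, f 2, f 1], swap12_unit, swap12_diag f,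
          by simpa using h02⟩
      · have h12 : f 1 = f 2 := by linear_combination h01 - h02
        exact ⟨!![(0:ℂ),0,1;0,1,0;1,0,0], ![f 2, f 1, f 0], swap02_unit, swap02_diag f,
          by simpa using h12.symm⟩
  -- the unitary U₀ and its determinant-fixing phase
  set U₀ : Matrix (Fin 3) (Fin 3) ℂ := P * star V with hU₀
  have hPs : P * star P = 1 := by
    simpa [Matrix.star_eq_conjTranspose] using hPunit
  have hU₀unit : U₀ * star U₀ = 1 := by
    rw [hU₀, StarMul.star_mul, star_star, Matrix.mul_assoc, ← Matrix.mul_assoc (star V),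
      hUV, Matrix.one_mul, hPs]
  -- conjugation by U₀ diagonalizes A with first two entries equal
  have hU₀A : U₀ * A * U₀ᴴ = diagonal w := by
    rw [hU₀, ← Matrix.star_eq_conjTranspose, StarMul.star_mul, star_star]
    calc P * star V * A * (V * star P) = P * (star V * A * V) * star P := by
          simp only [Matrix.mul_assoc]
      _ = diagonal w := by
          rw [hD, Matrix.star_eq_conjTranspose]
          exact hPdiag
  -- determinant bookkeeping
  have hdet1 : det U₀ * star (det U₀) = 1 := by
    have h := congrArg det hU₀unit
    rwa [det_mul, Matrix.star_eq_conjTranspose, det_conjTranspose, det_one] at h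
  have hdetne : det U₀ ≠ 0 := left_ne_zero_of_mul_eq_one hdet1
  obtain ⟨z, hz⟩ := IsAlgClosed.exists_pow_nat_eq ((det U₀)⁻¹) (n := 3) (by norm_num)
  have hnd : Complex.normSq (det U₀) = 1 := by
    have h := hdet1
    rw [Complex.star_def, Complex.mul_conj] at h
    exact_mod_cast h
  have h3 : (Complex.normSq z) ^ 3 = 1 := by
    have h := congrArg Complex.normSq hz
    rwa [map_pow, map_inv₀, hnd, inv_one] at h
  have hnz : Complex.normSq z = 1 := by
    nlinarith [Complex.normSq_nonneg z, sq_nonneg (Complex.normSq z - 1),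
      sq_nonneg (Complex.normSq z + 1)]
  have hzz : z * star z = 1 := by
    rw [Complex.star_def, Complex.mul_conj, hnz]
    norm_num
  refine ⟨z • U₀, ?_, ?_⟩
  · rw [Matrix.mem_specialUnitaryGroup_iff]
    constructor
    · rw [mem_unitaryGroup_iff, star_smul, Matrix.smul_mul, Matrix.mul_smul, smul_smul,
        hU₀unit, hzz, one_smul]
    · have hcard : det (z • U₀) = z ^ 3 * det U₀ := by
        rw [det_smul]
        norm_num
      rw [hcard, hz, inv_mul_cancel₀ hdetne]
  · intro i hi
    have hrw : (z • U₀) * A * (z • U₀)ᴴ = diagonal w := by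
      rw [conjTranspose_smul, Matrix.smul_mul, Matrix.smul_mul, Matrix.mul_smul, smul_smul,
        hzz, one_smul]
      exact hU₀A
    rw [hrw]
    exact diag_trace w hw i hi
end
end

section
/- Orbit-space constraints for three doublets: for every φ = (φ1,φ2,φ3) with each φ_a ∈ ℂ², the bilinears satisfy (i) r0(φ) ≥ 0, (ii) r0(φ)² − Σ_{i=1}^{8} r_i(φ)² ≥ 0, and (iii) Σ_{i,j,k} d_{ijk} r_i(φ) r_j(φ) r_k(φ) + (1/(2√3))·r0(φ)·(r0(φ)² − 3·Σ_{i=1}^{8} r_i(φ)²) = 0. -/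
open Matrix Complex BigOperators

noncomputable section

lemma hmul3 : Real.sqrt 3 * Real.sqrt 3 = 3 := Real.mul_self_sqrt (by norm_num)
lemma hi3 : (Real.sqrt 3)⁻¹ = Real.sqrt 3 / 3 := by
  rw [eq_div_iff (by norm_num : (3:ℝ) ≠ 0), inv_mul_eq_div, div_eq_iff
    (by positivity : Real.sqrt 3 ≠ 0)]
  linarith [hmul3]

def Tmat (x : Fin 8 → ℝ) : Matrix (Fin 3) (Fin 3) ℂ := ∑ i, (x i : ℂ) • tm i

lemma hTT1 (x : Fin 8 → ℝ) :
    Tmat x * Tmat x = ∑ i, ∑ j, (((x i : ℝ) : ℂ) * ((x j : ℝ) : ℂ)) • (tm i * tm j) := by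
  rw [Tmat, Matrix.sum_mul]
  refine Finset.sum_congr rfl fun i _ => ?_
  rw [Matrix.smul_mul, Matrix.mul_sum, Finset.smul_sum]
  refine Finset.sum_congr rfl fun j _ => ?_
  rw [Matrix.mul_smul, smul_smul]

lemma swap2 (c : Fin 8 → ℂ) (f : Fin 8 → Fin 8 → Matrix (Fin 3) (Fin 3) ℂ) :
    ∑ i, ∑ j, (c i * c j) • f i j = ∑ i, ∑ j, (c i * c j) • f j i := by
  rw [Finset.sum_comm]
  exact Finset.sum_congr rfl fun i _ => Finset.sum_congr rfl fun j _ => by rw [mul_comm]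

lemma hTTadd (x : Fin 8 → ℝ) :
    Tmat x * Tmat x + Tmat x * Tmat x
      = ∑ i, ∑ j, (((x i : ℝ) : ℂ) * ((x j : ℝ) : ℂ)) • (tm i * tm j + tm j * tm i) := by
  rw [hTT1]
  nth_rewrite 2 [swap2 (fun i => ((x i : ℝ) : ℂ)) (fun i j => tm i * tm j)]
  simp only [← Finset.sum_add_distrib, ← smul_add]

lemma rot3 (c : Fin 8 → ℂ) (g : Fin 8 → Fin 8 → Fin 8 → Matrix (Fin 3) (Fin 3) ℂ) :
    ∑ k, ∑ i, ∑ j, (c k * (c i * c j)) • g i j k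
      = ∑ i, ∑ j, ∑ k, (c i * c j * c k) • g i j k := by
  rw [Finset.sum_comm]
  refine Finset.sum_congr rfl fun i _ => ?_
  rw [Finset.sum_comm]
  refine Finset.sum_congr rfl fun j _ => Finset.sum_congr rfl fun k _ => ?_
  rw [show c k * (c i * c j) = c i * c j * c k by ring]

lemma hTTT (x : Fin 8 → ℝ) :
    (Tmat x * Tmat x + Tmat x * Tmat x) * Tmat x
      = ∑ i, ∑ j, ∑ k, (((x i : ℝ) : ℂ) * ((x j : ℝ) : ℂ) * ((x k : ℝ) : ℂ)) •
          ((tm i * tm j + tm j * tm i) * tm k) := by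
  rw [hTTadd]
  nth_rewrite 1 [Tmat]
  simp only [Matrix.sum_mul, Matrix.smul_mul, Matrix.mul_sum, Matrix.mul_smul, smul_smul,
    Finset.smul_sum]
  exact rot3 (fun i => ((x i : ℝ) : ℂ)) (fun i j k => (tm i * tm j + tm j * tm i) * tm k)

lemma cubic_core (x : Fin 8 → ℝ) :
    (∑ i, ∑ j, ∑ k, dT i j k * x i * x j * x k)
      = ((2:ℂ) * ((Tmat x * Tmat x + Tmat x * Tmat x) * Tmat x).trace).re := by
  rw [hTTT]
  simp only [Matrix.trace_sum, Matrix.trace_smul, Finset.mul_sum, Complex.re_sum]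
  refine Finset.sum_congr rfl fun i _ => Finset.sum_congr rfl fun j _ =>
    Finset.sum_congr rfl fun k _ => ?_
  simp only [smul_eq_mul, dT]
  rw [show (2:ℂ) * (((x i : ℝ) : ℂ) * ((x j : ℝ) : ℂ) * ((x k : ℝ) : ℂ) *
        ((tm i * tm j + tm j * tm i) * tm k).trace)
      = ((x i * x j * x k : ℝ) : ℂ) * ((2:ℂ) * ((tm i * tm j + tm j * tm i) * tm k).trace) by
    push_cast; ring]
  rw [Complex.re_ofReal_mul]
  ring
lemma hC3 : ((Real.sqrt 3 : ℝ) : ℂ)⁻¹ = ((Real.sqrt 3 / 3 : ℝ) : ℂ) := by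
  rw [← Complex.ofReal_inv, hi3]

lemma hT (x : Fin 8 → ℝ) : Tmat x = (2⁻¹ : ℂ) •
    !![(x 2 : ℂ) + ((Real.sqrt 3 : ℝ) : ℂ)⁻¹ * (x 7 : ℂ), (x 0 : ℂ) - (x 1 : ℂ) * I, (x 3 : ℂ) - (x 4 : ℂ) * I;
       (x 0 : ℂ) + (x 1 : ℂ) * I, -(x 2 : ℂ) + ((Real.sqrt 3 : ℝ) : ℂ)⁻¹ * (x 7 : ℂ), (x 5 : ℂ) - (x 6 : ℂ) * I;
       (x 3 : ℂ) + (x 4 : ℂ) * I, (x 5 : ℂ) + (x 6 : ℂ) * I, (-2) * ((Real.sqrt 3 : ℝ) : ℂ)⁻¹ * (x 7 : ℂ)] := by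
  funext i j
  fin_cases i <;> fin_cases j <;>
    simp [Tmat, Fin.sum_univ_eight, tm, gm, Matrix.smul_apply, Matrix.sum_apply,
      Matrix.add_apply, Matrix.vecHead, Matrix.vecTail, smul_eq_mul] <;> ring

set_option maxHeartbeats 4000000 in
lemma cubic_dT (x : Fin 8 → ℝ) :
    (∑ i, ∑ j, ∑ k, dT i j k * x i * x j * x k) =
      Real.sqrt 3 * (x 0^2 + x 1^2 + x 2^2) * x 7 - (Real.sqrt 3 / 3) * x 7^3
      + 3*(x 0*x 3*x 5 + x 0*x 4*x 6 + x 1*x 4*x 5 - x 1*x 3*x 6)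
      + (3/2)*x 2*(x 3^2 + x 4^2 - x 5^2 - x 6^2)
      - (Real.sqrt 3 / 2)*(x 3^2 + x 4^2 + x 5^2 + x 6^2)*x 7 := by
  have h2s : Tmat x * Tmat x + Tmat x * Tmat x = (2:ℂ) • (Tmat x * Tmat x) :=
    (two_smul ℂ _).symm
  rw [cubic_core, h2s, Matrix.smul_mul, Matrix.trace_smul, hT, hC3]
  simp only [Matrix.smul_mul, Matrix.mul_smul, smul_smul, Matrix.trace_smul]
  simp only [smul_eq_mul, Matrix.mul_fin_three, Matrix.trace_fin_three]
  simp only [Matrix.of_apply, Matrix.cons_val_zero, Matrix.cons_val_one, Matrix.cons_val_two, Matrix.cons_val,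
    Matrix.head_cons, Matrix.tail_cons]
  simp only [Complex.mul_re, Complex.mul_im, Complex.add_re, Complex.add_im, Complex.sub_re,
    Complex.sub_im, Complex.neg_re, Complex.neg_im, Complex.I_re, Complex.I_im,
    Complex.ofReal_re, Complex.ofReal_im]
  norm_num
  ring_nf
  linear_combination (-(Real.sqrt 3) * x 7 ^ 3 / 9) * hmul3
lemma ip_conj (x y : Fin 2 → ℂ) : ip y x = (starRingEnd ℂ) (ip x y) := by
  simp [ip, Fin.sum_univ_two, map_add, _root_.map_mul]; ring

lemma ip_self_im (x : Fin 2 → ℂ) : (ip x x).im = 0 := by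
  simp [ip, Fin.sum_univ_two, Complex.add_im, Complex.mul_im]; ring

lemma ip_self_re (x : Fin 2 → ℂ) : 0 ≤ (ip x x).re := by
  simp [ip, Fin.sum_univ_two, Complex.add_re, Complex.mul_re]
  nlinarith [mul_self_nonneg (x 0).re, mul_self_nonneg (x 0).im,
    mul_self_nonneg (x 1).re, mul_self_nonneg (x 1).im]

lemma gram2 (x y : Fin 2 → ℂ) :
    (ip x x).re * (ip y y).re - (((ip x y).re)^2 + ((ip x y).im)^2)
      = ((x 0 * y 1 - x 1 * y 0).re)^2 + ((x 0 * y 1 - x 1 * y 0).im)^2 := by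
  simp [ip, Fin.sum_univ_two, Complex.add_re, Complex.add_im, Complex.mul_re, Complex.mul_im,
    Complex.sub_re, Complex.sub_im]
  ring

lemma gram3 (x y z : Fin 2 → ℂ) :
    (ip x x).re * (ip y y).re * (ip z z).re
      + 2*(((ip x y).re*(ip y z).re - (ip x y).im*(ip y z).im)*(ip x z).re
          + ((ip x y).re*(ip y z).im + (ip x y).im*(ip y z).re)*(ip x z).im)
      - (ip x x).re*(((ip y z).re)^2+((ip y z).im)^2)
      - (ip y y).re*(((ip x z).re)^2+((ip x z).im)^2)
      - (ip z z).re*(((ip x y).re)^2+((ip x y).im)^2) = 0 := by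
  simp [ip, Fin.sum_univ_two, Complex.add_re, Complex.add_im, Complex.mul_re, Complex.mul_im]
  ring

section RV
variable (φ : Fin 3 → Fin 2 → ℂ)

lemma er0 : r0 φ = (Real.sqrt 3 / 3) *
    ((ip (φ 0) (φ 0)).re + (ip (φ 1) (φ 1)).re + (ip (φ 2) (φ 2)).re) := by
  rw [r0, hi3]; simp [Fin.sum_univ_three]; try ring

lemma e0 : rv 0 φ = (ip (φ 0) (φ 1)).re := by
  simp [rv, tm, gm, Fin.sum_univ_three, Matrix.smul_apply, Matrix.vecHead, Matrix.vecTail,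
    ip_conj (φ 0) (φ 1), ip_conj (φ 0) (φ 2), ip_conj (φ 1) (φ 2),
    Complex.mul_re, Complex.I_re, Complex.I_im]
  ring

lemma e1 : rv 1 φ = (ip (φ 0) (φ 1)).im := by
  simp [rv, tm, gm, Fin.sum_univ_three, Matrix.smul_apply, Matrix.vecHead, Matrix.vecTail,
    ip_conj (φ 0) (φ 1), ip_conj (φ 0) (φ 2), ip_conj (φ 1) (φ 2),
    Complex.mul_re, Complex.I_re, Complex.I_im]
  ring

lemma e2 : rv 2 φ = ((ip (φ 0) (φ 0)).re - (ip (φ 1) (φ 1)).re) / 2 := by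
  simp [rv, tm, gm, Fin.sum_univ_three, Matrix.smul_apply, Matrix.vecHead, Matrix.vecTail,
    ip_conj (φ 0) (φ 1), ip_conj (φ 0) (φ 2), ip_conj (φ 1) (φ 2),
    Complex.mul_re, Complex.I_re, Complex.I_im]
  ring

lemma e3 : rv 3 φ = (ip (φ 0) (φ 2)).re := by
  simp [rv, tm, gm, Fin.sum_univ_three, Matrix.smul_apply, Matrix.vecHead, Matrix.vecTail,
    ip_conj (φ 0) (φ 1), ip_conj (φ 0) (φ 2), ip_conj (φ 1) (φ 2),
    Complex.mul_re, Complex.I_re, Complex.I_im]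
  ring

lemma e4 : rv 4 φ = (ip (φ 0) (φ 2)).im := by
  simp [rv, tm, gm, Fin.sum_univ_three, Matrix.smul_apply, Matrix.vecHead, Matrix.vecTail,
    ip_conj (φ 0) (φ 1), ip_conj (φ 0) (φ 2), ip_conj (φ 1) (φ 2),
    Complex.mul_re, Complex.I_re, Complex.I_im]
  ring

lemma e5 : rv 5 φ = (ip (φ 1) (φ 2)).re := by
  simp [rv, tm, gm, Fin.sum_univ_three, Matrix.smul_apply, Matrix.vecHead, Matrix.vecTail,
    ip_conj (φ 0) (φ 1), ip_conj (φ 0) (φ 2), ip_conj (φ 1) (φ 2),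
    Complex.mul_re, Complex.I_re, Complex.I_im]
  ring

lemma e6 : rv 6 φ = (ip (φ 1) (φ 2)).im := by
  simp [rv, tm, gm, Fin.sum_univ_three, Matrix.smul_apply, Matrix.vecHead, Matrix.vecTail,
    ip_conj (φ 0) (φ 1), ip_conj (φ 0) (φ 2), ip_conj (φ 1) (φ 2),
    Complex.mul_re, Complex.I_re, Complex.I_im]
  ring

lemma e7 : rv 7 φ = (Real.sqrt 3 / 3) *
    (((ip (φ 0) (φ 0)).re + (ip (φ 1) (φ 1)).re - 2 * (ip (φ 2) (φ 2)).re) / 2) := by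
  simp [rv, tm, gm, hC3, Fin.sum_univ_three, Matrix.smul_apply, Matrix.vecHead, Matrix.vecTail,
    ip_conj (φ 0) (φ 1), ip_conj (φ 0) (φ 2), ip_conj (φ 1) (φ 2),
    Complex.mul_re, Complex.I_re, Complex.I_im, Complex.ofReal_re, Complex.ofReal_im]
  ring

end RV

lemma hi6 : (2 * Real.sqrt 3)⁻¹ = Real.sqrt 3 / 6 := by
  rw [mul_inv, hi3]; ring

/-- Orbit-space constraints for three doublets: `r₀ ≥ 0`, `r₀² − Σᵢ rᵢ² ≥ 0`, and
`Σ d_{ijk} rᵢ rⱼ r_k + (1/(2√3)) r₀ (r₀² − 3 Σᵢ rᵢ²) = 0`. -/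
theorem orbit_space_constraints (φ : Fin 3 → Fin 2 → ℂ) :
    0 ≤ r0 φ ∧
    0 ≤ (r0 φ) ^ 2 - ∑ i, (rv i φ) ^ 2 ∧
    (∑ i, ∑ j, ∑ k, dT i j k * rv i φ * rv j φ * rv k φ)
      + (2 * Real.sqrt 3)⁻¹ * r0 φ * ((r0 φ) ^ 2 - 3 * ∑ i, (rv i φ) ^ 2) = 0 := by
  have h01 := gram2 (φ 0) (φ 1)
  have h02 := gram2 (φ 0) (φ 2)
  have h12 := gram2 (φ 1) (φ 2)
  refine ⟨?_, ?_, ?_⟩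
  · rw [er0]
    have t0 := ip_self_re (φ 0); have t1 := ip_self_re (φ 1); have t2 := ip_self_re (φ 2)
    have hs : (0:ℝ) ≤ Real.sqrt 3 / 3 := by positivity
    nlinarith
  · have key : (r0 φ) ^ 2 - ∑ i, (rv i φ) ^ 2 =
        ((ip (φ 0) (φ 0)).re * (ip (φ 1) (φ 1)).re
          - (((ip (φ 0) (φ 1)).re)^2 + ((ip (φ 0) (φ 1)).im)^2))
        + ((ip (φ 0) (φ 0)).re * (ip (φ 2) (φ 2)).re
          - (((ip (φ 0) (φ 2)).re)^2 + ((ip (φ 0) (φ 2)).im)^2))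
        + ((ip (φ 1) (φ 1)).re * (ip (φ 2) (φ 2)).re
          - (((ip (φ 1) (φ 2)).re)^2 + ((ip (φ 1) (φ 2)).im)^2)) := by
      rw [Fin.sum_univ_eight, er0, e0, e1, e2, e3, e4, e5, e6, e7]
      linear_combination ((1/3) * (ip (φ 1) (φ 1)).re * (ip (φ 2) (φ 2)).re
        + (1/12) * ((ip (φ 1) (φ 1)).re)^2
        + (1/3) * (ip (φ 0) (φ 0)).re * (ip (φ 2) (φ 2)).re
        + (1/6) * (ip (φ 0) (φ 0)).re * (ip (φ 1) (φ 1)).re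
        + (1/12) * ((ip (φ 0) (φ 0)).re)^2) * hmul3
    rw [key, h01, h02, h12]
    positivity
  · have hc := cubic_dT (fun i => rv i φ)
    rw [hc, Fin.sum_univ_eight, er0, e0, e1, e2, e3, e4, e5, e6, e7, hi6]
    have hd := gram3 (φ 0) (φ 1) (φ 2)
    linear_combination
      (-(1/2) * (ip (φ 2) (φ 2)).re * ((ip (φ 0) (φ 1)).im)^2
        - (1/2) * (ip (φ 2) (φ 2)).re * ((ip (φ 0) (φ 1)).re)^2
        - (1/4) * (ip (φ 1) (φ 1)).re * ((ip (φ 1) (φ 2)).im)^2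
        - (1/4) * (ip (φ 1) (φ 1)).re * ((ip (φ 1) (φ 2)).re)^2
        - (1/4) * (ip (φ 1) (φ 1)).re * ((ip (φ 0) (φ 2)).im)^2
        - (1/4) * (ip (φ 1) (φ 1)).re * ((ip (φ 0) (φ 2)).re)^2
        + (1/24) * ((ip (φ 1) (φ 1)).re)^2 * (ip (φ 2) (φ 2)).re * (Real.sqrt 3)^2
        - (1/4) * (ip (φ 0) (φ 0)).re * ((ip (φ 1) (φ 2)).im)^2
        - (1/4) * (ip (φ 0) (φ 0)).re * ((ip (φ 1) (φ 2)).re)^2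
        - (1/4) * (ip (φ 0) (φ 0)).re * ((ip (φ 0) (φ 2)).im)^2
        - (1/4) * (ip (φ 0) (φ 0)).re * ((ip (φ 0) (φ 2)).re)^2
        + (1/2) * (ip (φ 0) (φ 0)).re * (ip (φ 1) (φ 1)).re * (ip (φ 2) (φ 2)).re
        + (1/12) * (ip (φ 0) (φ 0)).re * (ip (φ 1) (φ 1)).re * (ip (φ 2) (φ 2)).re * (Real.sqrt 3)^2
        + (1/24) * ((ip (φ 0) (φ 0)).re)^2 * (ip (φ 2) (φ 2)).re * (Real.sqrt 3)^2) * hmul3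
      + (3/2) * hd
end
end

section
/- The CP4 transformation has order 4 in every basis: let X = [[0,1,0],[−1,0,0],[0,0,1]]. Then X·conj(X) = diag(−1,−1,1) ≠ 1 while (X·conj(X))² = 1; moreover, for every unitary 3×3 matrix U, the basis-changed matrix X′ = U·X·Uᵀ satisfies X′·conj(X′) = U·(X·conj(X))·U† ≠ 1, so the antiunitary map φ ↦ X′·conj(φ) on ℂ³ squares to a nontrivial map but its fourth power is the identity, in every basis. -/
open Matrix Complex BigOperators

noncomputable section

lemma conj_mulVec (A : Matrix (Fin 3) (Fin 3) ℂ) (v : Fin 3 → ℂ) :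
    (fun b => (starRingEnd ℂ) (A.mulVec v b)) =
      (A.map (starRingEnd ℂ)).mulVec (fun b => (starRingEnd ℂ) (v b)) := by
  funext b
  simp [Matrix.mulVec, dotProduct, map_sum, Matrix.map_apply]

lemma map_conj_mul (A B : Matrix (Fin 3) (Fin 3) ℂ) :
    (A * B).map (starRingEnd ℂ) = A.map (starRingEnd ℂ) * B.map (starRingEnd ℂ) := by
  ext i j
  simp [Matrix.mul_apply, map_sum, Matrix.map_apply]

/-- The CP4 transformation has order 4 in every basis: `X·conj X = diag(−1,−1,1) ≠ 1`,
`(X·conj X)² = 1`, and for every unitary `U` the basis-changed matrix `X' = U X Uᵀ`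
satisfies `X'·conj X' = U (X·conj X) U† ≠ 1`; the antiunitary map `ψ ↦ X'·conj ψ`
squares to a nontrivial map whose square is the identity. -/
theorem cp4_order_four_in_every_basis :
    Xcp4 * Xcp4.map (starRingEnd ℂ) = !![-1, 0, 0; 0, -1, 0; 0, 0, 1] ∧
    Xcp4 * Xcp4.map (starRingEnd ℂ) ≠ 1 ∧
    (Xcp4 * Xcp4.map (starRingEnd ℂ)) ^ 2 = 1 ∧
    ∀ U : Matrix (Fin 3) (Fin 3) ℂ, U * Uᴴ = 1 →
      (U * Xcp4 * Uᵀ) * (U * Xcp4 * Uᵀ).map (starRingEnd ℂ)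
          = U * (Xcp4 * Xcp4.map (starRingEnd ℂ)) * Uᴴ ∧
      (U * Xcp4 * Uᵀ) * (U * Xcp4 * Uᵀ).map (starRingEnd ℂ) ≠ 1 ∧
      (let g : (Fin 3 → ℂ) → (Fin 3 → ℂ) :=
          fun ψ => (U * Xcp4 * Uᵀ).mulVec (fun b => (starRingEnd ℂ) (ψ b));
        g ∘ g ≠ id ∧ g ∘ g ∘ g ∘ g = id) := by
  have hdiag : Xcp4 * Xcp4.map (starRingEnd ℂ) = !![-1, 0, 0; 0, -1, 0; 0, 0, 1] := by
    ext i j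
    fin_cases i <;> fin_cases j <;>
      simp [Xcp4, Matrix.mul_apply, Fin.sum_univ_succ, Matrix.map_apply,
        Matrix.vecHead, Matrix.vecTail]
  have hne : Xcp4 * Xcp4.map (starRingEnd ℂ) ≠ 1 := by
    rw [hdiag]
    intro h
    have := congrFun (congrFun h 0) 0
    simp [Matrix.one_apply] at this
    norm_num at this
  have hsq : (Xcp4 * Xcp4.map (starRingEnd ℂ)) ^ 2 = 1 := by
    rw [hdiag]
    ext i j
    fin_cases i <;> fin_cases j <;>
      simp [pow_two, Matrix.mul_apply, Fin.sum_univ_succ, Matrix.one_apply]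
  refine ⟨hdiag, hne, hsq, ?_⟩
  intro U hU
  have hU' : Uᴴ * U = 1 := mul_eq_one_comm.mp hU
  have hUt : Uᵀ * U.map (starRingEnd ℂ) = 1 := by
    have h2 := congrArg (Matrix.map · (starRingEnd ℂ)) hU'
    simp only [map_conj_mul] at h2
    have h3 : (Uᴴ).map (starRingEnd ℂ) = Uᵀ := by
      ext i j; simp [Matrix.conjTranspose_apply, Matrix.map_apply]
    rw [h3] at h2
    simpa using h2
  have hmapconjH : Uᵀ.map (starRingEnd ℂ) = Uᴴ := by
    ext i j; simp [Matrix.conjTranspose_apply, Matrix.map_apply]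
  have key : (U * Xcp4 * Uᵀ) * (U * Xcp4 * Uᵀ).map (starRingEnd ℂ)
      = U * (Xcp4 * Xcp4.map (starRingEnd ℂ)) * Uᴴ := by
    rw [map_conj_mul, map_conj_mul, hmapconjH]
    calc U * Xcp4 * Uᵀ * (U.map (starRingEnd ℂ) * Xcp4.map (starRingEnd ℂ) * Uᴴ)
        = U * Xcp4 * (Uᵀ * U.map (starRingEnd ℂ)) * Xcp4.map (starRingEnd ℂ) * Uᴴ := by
          noncomm_ring
      _ = U * (Xcp4 * Xcp4.map (starRingEnd ℂ)) * Uᴴ := by rw [hUt]; noncomm_ring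
  have keyne : (U * Xcp4 * Uᵀ) * (U * Xcp4 * Uᵀ).map (starRingEnd ℂ) ≠ 1 := by
    rw [key]
    intro h
    apply hne
    have h4 : Uᴴ * (U * (Xcp4 * Xcp4.map (starRingEnd ℂ)) * Uᴴ) * U = Uᴴ * 1 * U := by
      rw [h]
    calc Xcp4 * Xcp4.map (starRingEnd ℂ)
        = Uᴴ * (U * (Xcp4 * Xcp4.map (starRingEnd ℂ)) * Uᴴ) * U := by
          rw [show Uᴴ * (U * (Xcp4 * Xcp4.map (starRingEnd ℂ)) * Uᴴ) * U
              = (Uᴴ * U) * (Xcp4 * Xcp4.map (starRingEnd ℂ)) * (Uᴴ * U) by noncomm_ring,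
            hU', Matrix.one_mul, Matrix.mul_one]
      _ = Uᴴ * 1 * U := h4
      _ = 1 := by rw [Matrix.mul_one, hU']
  refine ⟨key, keyne, ?_⟩
  set M := U * Xcp4 * Uᵀ with hM
  set C := M.map (starRingEnd ℂ) with hC
  clear_value C M
  intro g
  have hgdef : g = fun ψ => M.mulVec (fun b => (starRingEnd ℂ) (ψ b)) := rfl
  have hgg : ∀ ψ, g (g ψ) = (M * C).mulVec ψ := by
    intro ψ
    rw [hgdef]
    simp only
    rw [conj_mulVec, ← Matrix.mulVec_mulVec, ← hC]
    funext b
    simp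
  have hMC2 : (M * C) ^ 2 = 1 := by
    rw [pow_two, show M * C = U * (Xcp4 * Xcp4.map (starRingEnd ℂ)) * Uᴴ from key]
    calc U * (Xcp4 * Xcp4.map (starRingEnd ℂ)) * Uᴴ
            * (U * (Xcp4 * Xcp4.map (starRingEnd ℂ)) * Uᴴ)
        = U * ((Xcp4 * Xcp4.map (starRingEnd ℂ)) * (Uᴴ * U)
            * (Xcp4 * Xcp4.map (starRingEnd ℂ))) * Uᴴ := by noncomm_ring
      _ = U * ((Xcp4 * Xcp4.map (starRingEnd ℂ)) ^ 2) * Uᴴ := by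
          rw [hU', Matrix.mul_one, pow_two]
      _ = 1 := by rw [hsq, Matrix.mul_one, hU]
  constructor
  · intro h
    apply keyne
    show M * C = 1
    ext i j
    have h1 := congrFun (congrFun h (Pi.single j 1)) i
    simp only [Function.comp_apply, id_eq] at h1
    rw [hgg, Matrix.mulVec_single_one] at h1
    rw [show ((M * C) i j) = (M * C).col j i from rfl, h1]
    simp [Matrix.one_apply, Pi.single_apply, eq_comm]
  · funext ψ
    simp only [Function.comp_apply, id_eq]
    rw [hgg, hgg, Matrix.mulVec_mulVec, ← pow_two, hMC2, Matrix.one_mulVec]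
end
end

section
/- Structure of the CP4-invariant 4×4 block: let a ∈ ℝ and λ₅, λ₆, λ₇ ∈ ℂ satisfy |λ₆| = |λ₇| and conj(λ₅)·λ₆ = −λ₅·conj(λ₇). Let B be the real symmetric 4×4 matrix B = a·I₄ + [[Re λ₆, −Im λ₆, Re λ₅, −Im λ₅],[−Im λ₆, −Re λ₆, −Im λ₅, −Re λ₅],[Re λ₅, −Im λ₅, Re λ₇, −Im λ₇],[−Im λ₅, −Re λ₅, −Im λ₇, −Re λ₇]]. Then (B − a·I₄)² = (|λ₅|² + |λ₆|²)·I₄; consequently, the eigenvalues of B are a + √(|λ₅|² + |λ₆|²) and a − √(|λ₅|² + |λ₆|²), each with multiplicity 2. -/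
open Matrix Polynomial

theorem det_fin_four' {R : Type*} [CommRing R] (A : Matrix (Fin 4) (Fin 4) R) :
    A.det =
      A 0 0 * (A 1 1 * (A 2 2 * A 3 3 - A 2 3 * A 3 2)
             - A 1 2 * (A 2 1 * A 3 3 - A 2 3 * A 3 1)
             + A 1 3 * (A 2 1 * A 3 2 - A 2 2 * A 3 1))
    - A 0 1 * (A 1 0 * (A 2 2 * A 3 3 - A 2 3 * A 3 2)
             - A 1 2 * (A 2 0 * A 3 3 - A 2 3 * A 3 0)
             + A 1 3 * (A 2 0 * A 3 2 - A 2 2 * A 3 0))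
    + A 0 2 * (A 1 0 * (A 2 1 * A 3 3 - A 2 3 * A 3 1)
             - A 1 1 * (A 2 0 * A 3 3 - A 2 3 * A 3 0)
             + A 1 3 * (A 2 0 * A 3 1 - A 2 1 * A 3 0))
    - A 0 3 * (A 1 0 * (A 2 1 * A 3 2 - A 2 2 * A 3 1)
             - A 1 1 * (A 2 0 * A 3 2 - A 2 2 * A 3 0)
             + A 1 2 * (A 2 0 * A 3 1 - A 2 1 * A 3 0)) := by
  rw [Matrix.det_succ_row_zero, Fin.sum_univ_four]
  simp [Matrix.det_fin_three, Matrix.submatrix, Fin.succ, Fin.succAbove, Fin.lt_def,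
    show ((3:Fin 4):ℕ) = 3 from rfl, Fin.castSucc, Fin.castAdd, Fin.castLE]
  ring

/-- Structure of the CP4-invariant `4×4` block: if `|λ₆| = |λ₇|` and
`conj(λ₅)·λ₆ = −λ₅·conj(λ₇)`, then the real symmetric matrix `B` built from
`a, λ₅, λ₆, λ₇` satisfies `(B − a·I₄)² = (|λ₅|² + |λ₆|²)·I₄`; consequently its
eigenvalues are `a ± √(|λ₅|² + |λ₆|²)`, each with multiplicity 2 (characteristic
polynomial `(X − (a+s))²(X − (a−s))²`). -/
theorem cp4_block_structure (a : ℝ) (l5 l6 l7 : ℂ)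
    (h67 : ‖l6‖ = ‖l7‖)
    (h567 : (starRingEnd ℂ) l5 * l6 = -(l5 * (starRingEnd ℂ) l7)) :
    (let B : Matrix (Fin 4) (Fin 4) ℝ := a • (1 : Matrix (Fin 4) (Fin 4) ℝ) +
        !![l6.re, -l6.im, l5.re, -l5.im;
           -l6.im, -l6.re, -l5.im, -l5.re;
           l5.re, -l5.im, l7.re, -l7.im;
           -l5.im, -l5.re, -l7.im, -l7.re]
     (B - a • (1 : Matrix (Fin 4) (Fin 4) ℝ)) ^ 2
        = (‖l5‖ ^ 2 + ‖l6‖ ^ 2) • (1 : Matrix (Fin 4) (Fin 4) ℝ) ∧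
     B.charpoly =
        (X - C (a + Real.sqrt (‖l5‖ ^ 2 + ‖l6‖ ^ 2))) ^ 2 *
        (X - C (a - Real.sqrt (‖l5‖ ^ 2 + ‖l6‖ ^ 2))) ^ 2) := by
  have hE3 : l6.re*l6.re + l6.im*l6.im = l7.re*l7.re + l7.im*l7.im := by
    have h : Complex.normSq l6 = Complex.normSq l7 := by
      rw [← Complex.sq_norm, ← Complex.sq_norm, h67]
    simpa [Complex.normSq_apply] using h
  have h1 := congrArg Complex.re h567
  have h2 := congrArg Complex.im h567
  simp only [Complex.mul_re, Complex.mul_im, Complex.neg_re, Complex.neg_im,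
    Complex.conj_re, Complex.conj_im] at h1 h2
  have hE1 : l5.re*l6.re + l5.im*l6.im + (l5.re*l7.re + l5.im*l7.im) = 0 := by linarith
  have hE2 : l5.re*l6.im - l5.im*l6.re - l5.re*l7.im + l5.im*l7.re = 0 := by linarith
  have habs5 : ‖l5‖ ^ 2 = l5.re*l5.re + l5.im*l5.im := by
    rw [Complex.sq_norm, Complex.normSq_apply]
  have habs6 : ‖l6‖ ^ 2 = l6.re*l6.re + l6.im*l6.im := by
    rw [Complex.sq_norm, Complex.normSq_apply]
  refine ⟨?_, ?_⟩
  · rw [add_sub_cancel_left]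
    ext i j
    rw [pow_two]
    fin_cases i <;> fin_cases j <;>
      simp [Matrix.mul_apply, Fin.sum_univ_four, Matrix.one_apply, habs5, habs6] <;>
      linarith
  · set s := Real.sqrt (‖l5‖ ^ 2 + ‖l6‖ ^ 2) with hs
    have cE1 : (C l5.re * C l6.re + C l5.im * C l6.im +
        (C l5.re * C l7.re + C l5.im * C l7.im) : ℝ[X]) = 0 := by
      simp only [← C_mul, ← C_add]; rw [hE1, map_zero]
    have cE2 : (C l5.re * C l6.im - C l5.im * C l6.re - C l5.re * C l7.im +
        C l5.im * C l7.re : ℝ[X]) = 0 := by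
      simp only [← C_mul, ← C_add, ← C_sub]; rw [hE2, map_zero]
    have cE3 : (C l6.re * C l6.re + C l6.im * C l6.im : ℝ[X])
        = C l7.re * C l7.re + C l7.im * C l7.im := by
      simp only [← C_mul, ← C_add]; rw [hE3]
    have cS : ((C s : ℝ[X]))^2 = C l5.re * C l5.re + C l5.im * C l5.im +
        (C l6.re * C l6.re + C l6.im * C l6.im) := by
      simp only [← C_mul, ← C_add, ← C_pow]
      rw [hs, Real.sq_sqrt (by positivity)]
      congr 1
      rw [Complex.sq_norm, Complex.sq_norm, Complex.normSq_apply, Complex.normSq_apply]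
    rw [Matrix.charpoly, Matrix.charmatrix, det_fin_four']
    simp [Matrix.one_apply, C_add, C_sub, C_neg]
    linear_combination ((X - C a)^2 - (C l6.re*C l6.re + C l6.im*C l6.im)) * cE3
      - 2*(C l5.re*C l6.re + C l5.im*C l6.im) * cE1
      + 2*(C l5.im*C l6.re - C l5.re*C l6.im) * cE2
      + (2*(X - C a)^2 - (C l5.re*C l5.re + C l5.im*C l5.im + C l6.re*C l6.re + C l6.im*C l6.im)
          - (C s)^2) * cS
end

section
/- Complete alignment of all K-vectors for the CP4 block structure: let Λ be a real symmetric 8×8 matrix which is block-diagonal with respect to the index partition {1,2,3} ∪ {4,5,6,7} ∪ {8} (i.e., Λ_{ij} = 0 whenever i and j lie in different blocks), with arbitrary symmetric 3×3 block, arbitrary Λ_{88}, and whose 4×4 block B (indices 4,5,6,7) satisfies the linear conditions B_{46} + B_{57} = 0, −B_{47} + B_{56} = 0, B_{44} + B_{55} − B_{66} − B_{77} = 0 together with (B − (¼ Tr B)·I₄)² = μ²·I₄ for some μ ∈ ℝ. Then for every integer n ≥ 1 and every i ∈ {1,…,7}, one has Σ_{j,k} d_{ijk}·(Λⁿ)_{jk}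 = 0; that is, every vector K⁽ⁿ⁾ is aligned with the eighth coordinate direction. -/
open Matrix Complex BigOperators

noncomputable section

/-- The block of the index partition `{1,2,3} ∪ {4,5,6,7} ∪ {8}` containing `i`. -/
def blk (i : Fin 8) : ℕ := if i.val < 3 then 0 else if i.val < 7 then 1 else 2

lemma dT000 : dT 0 0 0 = 0 := by
  norm_num [dT, tm, gm, Matrix.trace, Matrix.mul_apply, Matrix.diag, Fin.sum_univ_succ] <;> ring_nf
lemma dT001 : dT 0 0 1 = 0 := by
  norm_num [dT, tm, gm, Matrix.trace, Matrix.mul_apply, Matrix.diag, Fin.sum_univ_succ] <;> ring_nf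
lemma dT002 : dT 0 0 2 = 0 := by
  norm_num [dT, tm, gm, Matrix.trace, Matrix.mul_apply, Matrix.diag, Fin.sum_univ_succ] <;> ring_nf
lemma dT010 : dT 0 1 0 = 0 := by
  norm_num [dT, tm, gm, Matrix.trace, Matrix.mul_apply, Matrix.diag, Fin.sum_univ_succ] <;> ring_nf
lemma dT011 : dT 0 1 1 = 0 := by
  norm_num [dT, tm, gm, Matrix.trace, Matrix.mul_apply, Matrix.diag, Fin.sum_univ_succ] <;> ring_nf
lemma dT012 : dT 0 1 2 = 0 := by
  norm_num [dT, tm, gm, Matrix.trace, Matrix.mul_apply, Matrix.diag, Fin.sum_univ_succ] <;> ring_nf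
lemma dT020 : dT 0 2 0 = 0 := by
  norm_num [dT, tm, gm, Matrix.trace, Matrix.mul_apply, Matrix.diag, Fin.sum_univ_succ] <;> ring_nf
lemma dT021 : dT 0 2 1 = 0 := by
  norm_num [dT, tm, gm, Matrix.trace, Matrix.mul_apply, Matrix.diag, Fin.sum_univ_succ] <;> ring_nf
lemma dT022 : dT 0 2 2 = 0 := by
  norm_num [dT, tm, gm, Matrix.trace, Matrix.mul_apply, Matrix.diag, Fin.sum_univ_succ] <;> ring_nf
lemma dT033 : dT 0 3 3 = 0 := by
  norm_num [dT, tm, gm, Matrix.trace, Matrix.mul_apply, Matrix.diag, Fin.sum_univ_succ] <;> ring_nf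
lemma dT034 : dT 0 3 4 = 0 := by
  norm_num [dT, tm, gm, Matrix.trace, Matrix.mul_apply, Matrix.diag, Fin.sum_univ_succ] <;> ring_nf
lemma dT035 : dT 0 3 5 = 1/2 := by
  norm_num [dT, tm, gm, Matrix.trace, Matrix.mul_apply, Matrix.diag, Fin.sum_univ_succ] <;> ring_nf
lemma dT036 : dT 0 3 6 = 0 := by
  norm_num [dT, tm, gm, Matrix.trace, Matrix.mul_apply, Matrix.diag, Fin.sum_univ_succ] <;> ring_nf
lemma dT043 : dT 0 4 3 = 0 := by
  norm_num [dT, tm, gm, Matrix.trace, Matrix.mul_apply, Matrix.diag, Fin.sum_univ_succ] <;> ring_nf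
lemma dT044 : dT 0 4 4 = 0 := by
  norm_num [dT, tm, gm, Matrix.trace, Matrix.mul_apply, Matrix.diag, Fin.sum_univ_succ] <;> ring_nf
lemma dT045 : dT 0 4 5 = 0 := by
  norm_num [dT, tm, gm, Matrix.trace, Matrix.mul_apply, Matrix.diag, Fin.sum_univ_succ] <;> ring_nf
lemma dT046 : dT 0 4 6 = 1/2 := by
  norm_num [dT, tm, gm, Matrix.trace, Matrix.mul_apply, Matrix.diag, Fin.sum_univ_succ] <;> ring_nf
lemma dT053 : dT 0 5 3 = 1/2 := by
  norm_num [dT, tm, gm, Matrix.trace, Matrix.mul_apply, Matrix.diag, Fin.sum_univ_succ] <;> ring_nf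
lemma dT054 : dT 0 5 4 = 0 := by
  norm_num [dT, tm, gm, Matrix.trace, Matrix.mul_apply, Matrix.diag, Fin.sum_univ_succ] <;> ring_nf
lemma dT055 : dT 0 5 5 = 0 := by
  norm_num [dT, tm, gm, Matrix.trace, Matrix.mul_apply, Matrix.diag, Fin.sum_univ_succ] <;> ring_nf
lemma dT056 : dT 0 5 6 = 0 := by
  norm_num [dT, tm, gm, Matrix.trace, Matrix.mul_apply, Matrix.diag, Fin.sum_univ_succ] <;> ring_nf
lemma dT063 : dT 0 6 3 = 0 := by
  norm_num [dT, tm, gm, Matrix.trace, Matrix.mul_apply, Matrix.diag, Fin.sum_univ_succ] <;> ring_nf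
lemma dT064 : dT 0 6 4 = 1/2 := by
  norm_num [dT, tm, gm, Matrix.trace, Matrix.mul_apply, Matrix.diag, Fin.sum_univ_succ] <;> ring_nf
lemma dT065 : dT 0 6 5 = 0 := by
  norm_num [dT, tm, gm, Matrix.trace, Matrix.mul_apply, Matrix.diag, Fin.sum_univ_succ] <;> ring_nf
lemma dT066 : dT 0 6 6 = 0 := by
  norm_num [dT, tm, gm, Matrix.trace, Matrix.mul_apply, Matrix.diag, Fin.sum_univ_succ] <;> ring_nf
lemma dT077 : dT 0 7 7 = 0 := by
  norm_num [dT, tm, gm, Matrix.trace, Matrix.mul_apply, Matrix.diag, Fin.sum_univ_succ] <;> ring_nf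
lemma dT100 : dT 1 0 0 = 0 := by
  norm_num [dT, tm, gm, Matrix.trace, Matrix.mul_apply, Matrix.diag, Fin.sum_univ_succ] <;> ring_nf
lemma dT101 : dT 1 0 1 = 0 := by
  norm_num [dT, tm, gm, Matrix.trace, Matrix.mul_apply, Matrix.diag, Fin.sum_univ_succ] <;> ring_nf
lemma dT102 : dT 1 0 2 = 0 := by
  norm_num [dT, tm, gm, Matrix.trace, Matrix.mul_apply, Matrix.diag, Fin.sum_univ_succ] <;> ring_nf
lemma dT110 : dT 1 1 0 = 0 := by
  norm_num [dT, tm, gm, Matrix.trace, Matrix.mul_apply, Matrix.diag, Fin.sum_univ_succ] <;> ring_nf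
lemma dT111 : dT 1 1 1 = 0 := by
  norm_num [dT, tm, gm, Matrix.trace, Matrix.mul_apply, Matrix.diag, Fin.sum_univ_succ] <;> ring_nf
lemma dT112 : dT 1 1 2 = 0 := by
  norm_num [dT, tm, gm, Matrix.trace, Matrix.mul_apply, Matrix.diag, Fin.sum_univ_succ] <;> ring_nf
lemma dT120 : dT 1 2 0 = 0 := by
  norm_num [dT, tm, gm, Matrix.trace, Matrix.mul_apply, Matrix.diag, Fin.sum_univ_succ] <;> ring_nf
lemma dT121 : dT 1 2 1 = 0 := by
  norm_num [dT, tm, gm, Matrix.trace, Matrix.mul_apply, Matrix.diag, Fin.sum_univ_succ] <;> ring_nf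
lemma dT122 : dT 1 2 2 = 0 := by
  norm_num [dT, tm, gm, Matrix.trace, Matrix.mul_apply, Matrix.diag, Fin.sum_univ_succ] <;> ring_nf
lemma dT133 : dT 1 3 3 = 0 := by
  norm_num [dT, tm, gm, Matrix.trace, Matrix.mul_apply, Matrix.diag, Fin.sum_univ_succ] <;> ring_nf
lemma dT134 : dT 1 3 4 = 0 := by
  norm_num [dT, tm, gm, Matrix.trace, Matrix.mul_apply, Matrix.diag, Fin.sum_univ_succ] <;> ring_nf
lemma dT135 : dT 1 3 5 = 0 := by
  norm_num [dT, tm, gm, Matrix.trace, Matrix.mul_apply, Matrix.diag, Fin.sum_univ_succ] <;> ring_nf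
lemma dT136 : dT 1 3 6 = -1/2 := by
  norm_num [dT, tm, gm, Matrix.trace, Matrix.mul_apply, Matrix.diag, Fin.sum_univ_succ] <;> ring_nf
lemma dT143 : dT 1 4 3 = 0 := by
  norm_num [dT, tm, gm, Matrix.trace, Matrix.mul_apply, Matrix.diag, Fin.sum_univ_succ] <;> ring_nf
lemma dT144 : dT 1 4 4 = 0 := by
  norm_num [dT, tm, gm, Matrix.trace, Matrix.mul_apply, Matrix.diag, Fin.sum_univ_succ] <;> ring_nf
lemma dT145 : dT 1 4 5 = 1/2 := by
  norm_num [dT, tm, gm, Matrix.trace, Matrix.mul_apply, Matrix.diag, Fin.sum_univ_succ] <;> ring_nf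
lemma dT146 : dT 1 4 6 = 0 := by
  norm_num [dT, tm, gm, Matrix.trace, Matrix.mul_apply, Matrix.diag, Fin.sum_univ_succ] <;> ring_nf
lemma dT153 : dT 1 5 3 = 0 := by
  norm_num [dT, tm, gm, Matrix.trace, Matrix.mul_apply, Matrix.diag, Fin.sum_univ_succ] <;> ring_nf
lemma dT154 : dT 1 5 4 = 1/2 := by
  norm_num [dT, tm, gm, Matrix.trace, Matrix.mul_apply, Matrix.diag, Fin.sum_univ_succ] <;> ring_nf
lemma dT155 : dT 1 5 5 = 0 := by
  norm_num [dT, tm, gm, Matrix.trace, Matrix.mul_apply, Matrix.diag, Fin.sum_univ_succ] <;> ring_nf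
lemma dT156 : dT 1 5 6 = 0 := by
  norm_num [dT, tm, gm, Matrix.trace, Matrix.mul_apply, Matrix.diag, Fin.sum_univ_succ] <;> ring_nf
lemma dT163 : dT 1 6 3 = -1/2 := by
  norm_num [dT, tm, gm, Matrix.trace, Matrix.mul_apply, Matrix.diag, Fin.sum_univ_succ] <;> ring_nf
lemma dT164 : dT 1 6 4 = 0 := by
  norm_num [dT, tm, gm, Matrix.trace, Matrix.mul_apply, Matrix.diag, Fin.sum_univ_succ] <;> ring_nf
lemma dT165 : dT 1 6 5 = 0 := by
  norm_num [dT, tm, gm, Matrix.trace, Matrix.mul_apply, Matrix.diag, Fin.sum_univ_succ] <;> ring_nf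
lemma dT166 : dT 1 6 6 = 0 := by
  norm_num [dT, tm, gm, Matrix.trace, Matrix.mul_apply, Matrix.diag, Fin.sum_univ_succ] <;> ring_nf
lemma dT177 : dT 1 7 7 = 0 := by
  norm_num [dT, tm, gm, Matrix.trace, Matrix.mul_apply, Matrix.diag, Fin.sum_univ_succ] <;> ring_nf
lemma dT200 : dT 2 0 0 = 0 := by
  norm_num [dT, tm, gm, Matrix.trace, Matrix.mul_apply, Matrix.diag, Fin.sum_univ_succ] <;> ring_nf
lemma dT201 : dT 2 0 1 = 0 := by
  norm_num [dT, tm, gm, Matrix.trace, Matrix.mul_apply, Matrix.diag, Fin.sum_univ_succ] <;> ring_nf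
lemma dT202 : dT 2 0 2 = 0 := by
  norm_num [dT, tm, gm, Matrix.trace, Matrix.mul_apply, Matrix.diag, Fin.sum_univ_succ] <;> ring_nf
lemma dT210 : dT 2 1 0 = 0 := by
  norm_num [dT, tm, gm, Matrix.trace, Matrix.mul_apply, Matrix.diag, Fin.sum_univ_succ] <;> ring_nf
lemma dT211 : dT 2 1 1 = 0 := by
  norm_num [dT, tm, gm, Matrix.trace, Matrix.mul_apply, Matrix.diag, Fin.sum_univ_succ] <;> ring_nf
lemma dT212 : dT 2 1 2 = 0 := by
  norm_num [dT, tm, gm, Matrix.trace, Matrix.mul_apply, Matrix.diag, Fin.sum_univ_succ] <;> ring_nf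
lemma dT220 : dT 2 2 0 = 0 := by
  norm_num [dT, tm, gm, Matrix.trace, Matrix.mul_apply, Matrix.diag, Fin.sum_univ_succ] <;> ring_nf
lemma dT221 : dT 2 2 1 = 0 := by
  norm_num [dT, tm, gm, Matrix.trace, Matrix.mul_apply, Matrix.diag, Fin.sum_univ_succ] <;> ring_nf
lemma dT222 : dT 2 2 2 = 0 := by
  norm_num [dT, tm, gm, Matrix.trace, Matrix.mul_apply, Matrix.diag, Fin.sum_univ_succ] <;> ring_nf
lemma dT233 : dT 2 3 3 = 1/2 := by
  norm_num [dT, tm, gm, Matrix.trace, Matrix.mul_apply, Matrix.diag, Fin.sum_univ_succ] <;> ring_nf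
lemma dT234 : dT 2 3 4 = 0 := by
  norm_num [dT, tm, gm, Matrix.trace, Matrix.mul_apply, Matrix.diag, Fin.sum_univ_succ] <;> ring_nf
lemma dT235 : dT 2 3 5 = 0 := by
  norm_num [dT, tm, gm, Matrix.trace, Matrix.mul_apply, Matrix.diag, Fin.sum_univ_succ] <;> ring_nf
lemma dT236 : dT 2 3 6 = 0 := by
  norm_num [dT, tm, gm, Matrix.trace, Matrix.mul_apply, Matrix.diag, Fin.sum_univ_succ] <;> ring_nf
lemma dT243 : dT 2 4 3 = 0 := by
  norm_num [dT, tm, gm, Matrix.trace, Matrix.mul_apply, Matrix.diag, Fin.sum_univ_succ] <;> ring_nf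
lemma dT244 : dT 2 4 4 = 1/2 := by
  norm_num [dT, tm, gm, Matrix.trace, Matrix.mul_apply, Matrix.diag, Fin.sum_univ_succ] <;> ring_nf
lemma dT245 : dT 2 4 5 = 0 := by
  norm_num [dT, tm, gm, Matrix.trace, Matrix.mul_apply, Matrix.diag, Fin.sum_univ_succ] <;> ring_nf
lemma dT246 : dT 2 4 6 = 0 := by
  norm_num [dT, tm, gm, Matrix.trace, Matrix.mul_apply, Matrix.diag, Fin.sum_univ_succ] <;> ring_nf
lemma dT253 : dT 2 5 3 = 0 := by
  norm_num [dT, tm, gm, Matrix.trace, Matrix.mul_apply, Matrix.diag, Fin.sum_univ_succ] <;> ring_nf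
lemma dT254 : dT 2 5 4 = 0 := by
  norm_num [dT, tm, gm, Matrix.trace, Matrix.mul_apply, Matrix.diag, Fin.sum_univ_succ] <;> ring_nf
lemma dT255 : dT 2 5 5 = -1/2 := by
  norm_num [dT, tm, gm, Matrix.trace, Matrix.mul_apply, Matrix.diag, Fin.sum_univ_succ] <;> ring_nf
lemma dT256 : dT 2 5 6 = 0 := by
  norm_num [dT, tm, gm, Matrix.trace, Matrix.mul_apply, Matrix.diag, Fin.sum_univ_succ] <;> ring_nf
lemma dT263 : dT 2 6 3 = 0 := by
  norm_num [dT, tm, gm, Matrix.trace, Matrix.mul_apply, Matrix.diag, Fin.sum_univ_succ] <;> ring_nf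
lemma dT264 : dT 2 6 4 = 0 := by
  norm_num [dT, tm, gm, Matrix.trace, Matrix.mul_apply, Matrix.diag, Fin.sum_univ_succ] <;> ring_nf
lemma dT265 : dT 2 6 5 = 0 := by
  norm_num [dT, tm, gm, Matrix.trace, Matrix.mul_apply, Matrix.diag, Fin.sum_univ_succ] <;> ring_nf
lemma dT266 : dT 2 6 6 = -1/2 := by
  norm_num [dT, tm, gm, Matrix.trace, Matrix.mul_apply, Matrix.diag, Fin.sum_univ_succ] <;> ring_nf
lemma dT277 : dT 2 7 7 = 0 := by
  norm_num [dT, tm, gm, Matrix.trace, Matrix.mul_apply, Matrix.diag, Fin.sum_univ_succ] <;> ring_nf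
lemma dT300 : dT 3 0 0 = 0 := by
  norm_num [dT, tm, gm, Matrix.trace, Matrix.mul_apply, Matrix.diag, Fin.sum_univ_succ] <;> ring_nf
lemma dT301 : dT 3 0 1 = 0 := by
  norm_num [dT, tm, gm, Matrix.trace, Matrix.mul_apply, Matrix.diag, Fin.sum_univ_succ] <;> ring_nf
lemma dT302 : dT 3 0 2 = 0 := by
  norm_num [dT, tm, gm, Matrix.trace, Matrix.mul_apply, Matrix.diag, Fin.sum_univ_succ] <;> ring_nf
lemma dT310 : dT 3 1 0 = 0 := by
  norm_num [dT, tm, gm, Matrix.trace, Matrix.mul_apply, Matrix.diag, Fin.sum_univ_succ] <;> ring_nf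
lemma dT311 : dT 3 1 1 = 0 := by
  norm_num [dT, tm, gm, Matrix.trace, Matrix.mul_apply, Matrix.diag, Fin.sum_univ_succ] <;> ring_nf
lemma dT312 : dT 3 1 2 = 0 := by
  norm_num [dT, tm, gm, Matrix.trace, Matrix.mul_apply, Matrix.diag, Fin.sum_univ_succ] <;> ring_nf
lemma dT320 : dT 3 2 0 = 0 := by
  norm_num [dT, tm, gm, Matrix.trace, Matrix.mul_apply, Matrix.diag, Fin.sum_univ_succ] <;> ring_nf
lemma dT321 : dT 3 2 1 = 0 := by
  norm_num [dT, tm, gm, Matrix.trace, Matrix.mul_apply, Matrix.diag, Fin.sum_univ_succ] <;> ring_nf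
lemma dT322 : dT 3 2 2 = 0 := by
  norm_num [dT, tm, gm, Matrix.trace, Matrix.mul_apply, Matrix.diag, Fin.sum_univ_succ] <;> ring_nf
lemma dT333 : dT 3 3 3 = 0 := by
  norm_num [dT, tm, gm, Matrix.trace, Matrix.mul_apply, Matrix.diag, Fin.sum_univ_succ] <;> ring_nf
lemma dT334 : dT 3 3 4 = 0 := by
  norm_num [dT, tm, gm, Matrix.trace, Matrix.mul_apply, Matrix.diag, Fin.sum_univ_succ] <;> ring_nf
lemma dT335 : dT 3 3 5 = 0 := by
  norm_num [dT, tm, gm, Matrix.trace, Matrix.mul_apply, Matrix.diag, Fin.sum_univ_succ] <;> ring_nf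
lemma dT336 : dT 3 3 6 = 0 := by
  norm_num [dT, tm, gm, Matrix.trace, Matrix.mul_apply, Matrix.diag, Fin.sum_univ_succ] <;> ring_nf
lemma dT343 : dT 3 4 3 = 0 := by
  norm_num [dT, tm, gm, Matrix.trace, Matrix.mul_apply, Matrix.diag, Fin.sum_univ_succ] <;> ring_nf
lemma dT344 : dT 3 4 4 = 0 := by
  norm_num [dT, tm, gm, Matrix.trace, Matrix.mul_apply, Matrix.diag, Fin.sum_univ_succ] <;> ring_nf
lemma dT345 : dT 3 4 5 = 0 := by
  norm_num [dT, tm, gm, Matrix.trace, Matrix.mul_apply, Matrix.diag, Fin.sum_univ_succ] <;> ring_nf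
lemma dT346 : dT 3 4 6 = 0 := by
  norm_num [dT, tm, gm, Matrix.trace, Matrix.mul_apply, Matrix.diag, Fin.sum_univ_succ] <;> ring_nf
lemma dT353 : dT 3 5 3 = 0 := by
  norm_num [dT, tm, gm, Matrix.trace, Matrix.mul_apply, Matrix.diag, Fin.sum_univ_succ] <;> ring_nf
lemma dT354 : dT 3 5 4 = 0 := by
  norm_num [dT, tm, gm, Matrix.trace, Matrix.mul_apply, Matrix.diag, Fin.sum_univ_succ] <;> ring_nf
lemma dT355 : dT 3 5 5 = 0 := by
  norm_num [dT, tm, gm, Matrix.trace, Matrix.mul_apply, Matrix.diag, Fin.sum_univ_succ] <;> ring_nf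
lemma dT356 : dT 3 5 6 = 0 := by
  norm_num [dT, tm, gm, Matrix.trace, Matrix.mul_apply, Matrix.diag, Fin.sum_univ_succ] <;> ring_nf
lemma dT363 : dT 3 6 3 = 0 := by
  norm_num [dT, tm, gm, Matrix.trace, Matrix.mul_apply, Matrix.diag, Fin.sum_univ_succ] <;> ring_nf
lemma dT364 : dT 3 6 4 = 0 := by
  norm_num [dT, tm, gm, Matrix.trace, Matrix.mul_apply, Matrix.diag, Fin.sum_univ_succ] <;> ring_nf
lemma dT365 : dT 3 6 5 = 0 := by
  norm_num [dT, tm, gm, Matrix.trace, Matrix.mul_apply, Matrix.diag, Fin.sum_univ_succ] <;> ring_nf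
lemma dT366 : dT 3 6 6 = 0 := by
  norm_num [dT, tm, gm, Matrix.trace, Matrix.mul_apply, Matrix.diag, Fin.sum_univ_succ] <;> ring_nf
lemma dT377 : dT 3 7 7 = 0 := by
  norm_num [dT, tm, gm, Matrix.trace, Matrix.mul_apply, Matrix.diag, Fin.sum_univ_succ] <;> ring_nf
lemma dT400 : dT 4 0 0 = 0 := by
  norm_num [dT, tm, gm, Matrix.trace, Matrix.mul_apply, Matrix.diag, Fin.sum_univ_succ] <;> ring_nf
lemma dT401 : dT 4 0 1 = 0 := by
  norm_num [dT, tm, gm, Matrix.trace, Matrix.mul_apply, Matrix.diag, Fin.sum_univ_succ] <;> ring_nf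
lemma dT402 : dT 4 0 2 = 0 := by
  norm_num [dT, tm, gm, Matrix.trace, Matrix.mul_apply, Matrix.diag, Fin.sum_univ_succ] <;> ring_nf
lemma dT410 : dT 4 1 0 = 0 := by
  norm_num [dT, tm, gm, Matrix.trace, Matrix.mul_apply, Matrix.diag, Fin.sum_univ_succ] <;> ring_nf
lemma dT411 : dT 4 1 1 = 0 := by
  norm_num [dT, tm, gm, Matrix.trace, Matrix.mul_apply, Matrix.diag, Fin.sum_univ_succ] <;> ring_nf
lemma dT412 : dT 4 1 2 = 0 := by
  norm_num [dT, tm, gm, Matrix.trace, Matrix.mul_apply, Matrix.diag, Fin.sum_univ_succ] <;> ring_nf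
lemma dT420 : dT 4 2 0 = 0 := by
  norm_num [dT, tm, gm, Matrix.trace, Matrix.mul_apply, Matrix.diag, Fin.sum_univ_succ] <;> ring_nf
lemma dT421 : dT 4 2 1 = 0 := by
  norm_num [dT, tm, gm, Matrix.trace, Matrix.mul_apply, Matrix.diag, Fin.sum_univ_succ] <;> ring_nf
lemma dT422 : dT 4 2 2 = 0 := by
  norm_num [dT, tm, gm, Matrix.trace, Matrix.mul_apply, Matrix.diag, Fin.sum_univ_succ] <;> ring_nf
lemma dT433 : dT 4 3 3 = 0 := by
  norm_num [dT, tm, gm, Matrix.trace, Matrix.mul_apply, Matrix.diag, Fin.sum_univ_succ] <;> ring_nf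
lemma dT434 : dT 4 3 4 = 0 := by
  norm_num [dT, tm, gm, Matrix.trace, Matrix.mul_apply, Matrix.diag, Fin.sum_univ_succ] <;> ring_nf
lemma dT435 : dT 4 3 5 = 0 := by
  norm_num [dT, tm, gm, Matrix.trace, Matrix.mul_apply, Matrix.diag, Fin.sum_univ_succ] <;> ring_nf
lemma dT436 : dT 4 3 6 = 0 := by
  norm_num [dT, tm, gm, Matrix.trace, Matrix.mul_apply, Matrix.diag, Fin.sum_univ_succ] <;> ring_nf
lemma dT443 : dT 4 4 3 = 0 := by
  norm_num [dT, tm, gm, Matrix.trace, Matrix.mul_apply, Matrix.diag, Fin.sum_univ_succ] <;> ring_nf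
lemma dT444 : dT 4 4 4 = 0 := by
  norm_num [dT, tm, gm, Matrix.trace, Matrix.mul_apply, Matrix.diag, Fin.sum_univ_succ] <;> ring_nf
lemma dT445 : dT 4 4 5 = 0 := by
  norm_num [dT, tm, gm, Matrix.trace, Matrix.mul_apply, Matrix.diag, Fin.sum_univ_succ] <;> ring_nf
lemma dT446 : dT 4 4 6 = 0 := by
  norm_num [dT, tm, gm, Matrix.trace, Matrix.mul_apply, Matrix.diag, Fin.sum_univ_succ] <;> ring_nf
lemma dT453 : dT 4 5 3 = 0 := by
  norm_num [dT, tm, gm, Matrix.trace, Matrix.mul_apply, Matrix.diag, Fin.sum_univ_succ] <;> ring_nf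
lemma dT454 : dT 4 5 4 = 0 := by
  norm_num [dT, tm, gm, Matrix.trace, Matrix.mul_apply, Matrix.diag, Fin.sum_univ_succ] <;> ring_nf
lemma dT455 : dT 4 5 5 = 0 := by
  norm_num [dT, tm, gm, Matrix.trace, Matrix.mul_apply, Matrix.diag, Fin.sum_univ_succ] <;> ring_nf
lemma dT456 : dT 4 5 6 = 0 := by
  norm_num [dT, tm, gm, Matrix.trace, Matrix.mul_apply, Matrix.diag, Fin.sum_univ_succ] <;> ring_nf
lemma dT463 : dT 4 6 3 = 0 := by
  norm_num [dT, tm, gm, Matrix.trace, Matrix.mul_apply, Matrix.diag, Fin.sum_univ_succ] <;> ring_nf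
lemma dT464 : dT 4 6 4 = 0 := by
  norm_num [dT, tm, gm, Matrix.trace, Matrix.mul_apply, Matrix.diag, Fin.sum_univ_succ] <;> ring_nf
lemma dT465 : dT 4 6 5 = 0 := by
  norm_num [dT, tm, gm, Matrix.trace, Matrix.mul_apply, Matrix.diag, Fin.sum_univ_succ] <;> ring_nf
lemma dT466 : dT 4 6 6 = 0 := by
  norm_num [dT, tm, gm, Matrix.trace, Matrix.mul_apply, Matrix.diag, Fin.sum_univ_succ] <;> ring_nf
lemma dT477 : dT 4 7 7 = 0 := by
  norm_num [dT, tm, gm, Matrix.trace, Matrix.mul_apply, Matrix.diag, Fin.sum_univ_succ] <;> ring_nf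
lemma dT500 : dT 5 0 0 = 0 := by
  norm_num [dT, tm, gm, Matrix.trace, Matrix.mul_apply, Matrix.diag, Fin.sum_univ_succ] <;> ring_nf
lemma dT501 : dT 5 0 1 = 0 := by
  norm_num [dT, tm, gm, Matrix.trace, Matrix.mul_apply, Matrix.diag, Fin.sum_univ_succ] <;> ring_nf
lemma dT502 : dT 5 0 2 = 0 := by
  norm_num [dT, tm, gm, Matrix.trace, Matrix.mul_apply, Matrix.diag, Fin.sum_univ_succ] <;> ring_nf
lemma dT510 : dT 5 1 0 = 0 := by
  norm_num [dT, tm, gm, Matrix.trace, Matrix.mul_apply, Matrix.diag, Fin.sum_univ_succ] <;> ring_nf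
lemma dT511 : dT 5 1 1 = 0 := by
  norm_num [dT, tm, gm, Matrix.trace, Matrix.mul_apply, Matrix.diag, Fin.sum_univ_succ] <;> ring_nf
lemma dT512 : dT 5 1 2 = 0 := by
  norm_num [dT, tm, gm, Matrix.trace, Matrix.mul_apply, Matrix.diag, Fin.sum_univ_succ] <;> ring_nf
lemma dT520 : dT 5 2 0 = 0 := by
  norm_num [dT, tm, gm, Matrix.trace, Matrix.mul_apply, Matrix.diag, Fin.sum_univ_succ] <;> ring_nf
lemma dT521 : dT 5 2 1 = 0 := by
  norm_num [dT, tm, gm, Matrix.trace, Matrix.mul_apply, Matrix.diag, Fin.sum_univ_succ] <;> ring_nf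
lemma dT522 : dT 5 2 2 = 0 := by
  norm_num [dT, tm, gm, Matrix.trace, Matrix.mul_apply, Matrix.diag, Fin.sum_univ_succ] <;> ring_nf
lemma dT533 : dT 5 3 3 = 0 := by
  norm_num [dT, tm, gm, Matrix.trace, Matrix.mul_apply, Matrix.diag, Fin.sum_univ_succ] <;> ring_nf
lemma dT534 : dT 5 3 4 = 0 := by
  norm_num [dT, tm, gm, Matrix.trace, Matrix.mul_apply, Matrix.diag, Fin.sum_univ_succ] <;> ring_nf
lemma dT535 : dT 5 3 5 = 0 := by
  norm_num [dT, tm, gm, Matrix.trace, Matrix.mul_apply, Matrix.diag, Fin.sum_univ_succ] <;> ring_nf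
lemma dT536 : dT 5 3 6 = 0 := by
  norm_num [dT, tm, gm, Matrix.trace, Matrix.mul_apply, Matrix.diag, Fin.sum_univ_succ] <;> ring_nf
lemma dT543 : dT 5 4 3 = 0 := by
  norm_num [dT, tm, gm, Matrix.trace, Matrix.mul_apply, Matrix.diag, Fin.sum_univ_succ] <;> ring_nf
lemma dT544 : dT 5 4 4 = 0 := by
  norm_num [dT, tm, gm, Matrix.trace, Matrix.mul_apply, Matrix.diag, Fin.sum_univ_succ] <;> ring_nf
lemma dT545 : dT 5 4 5 = 0 := by
  norm_num [dT, tm, gm, Matrix.trace, Matrix.mul_apply, Matrix.diag, Fin.sum_univ_succ] <;> ring_nf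
lemma dT546 : dT 5 4 6 = 0 := by
  norm_num [dT, tm, gm, Matrix.trace, Matrix.mul_apply, Matrix.diag, Fin.sum_univ_succ] <;> ring_nf
lemma dT553 : dT 5 5 3 = 0 := by
  norm_num [dT, tm, gm, Matrix.trace, Matrix.mul_apply, Matrix.diag, Fin.sum_univ_succ] <;> ring_nf
lemma dT554 : dT 5 5 4 = 0 := by
  norm_num [dT, tm, gm, Matrix.trace, Matrix.mul_apply, Matrix.diag, Fin.sum_univ_succ] <;> ring_nf
lemma dT555 : dT 5 5 5 = 0 := by
  norm_num [dT, tm, gm, Matrix.trace, Matrix.mul_apply, Matrix.diag, Fin.sum_univ_succ] <;> ring_nf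
lemma dT556 : dT 5 5 6 = 0 := by
  norm_num [dT, tm, gm, Matrix.trace, Matrix.mul_apply, Matrix.diag, Fin.sum_univ_succ] <;> ring_nf
lemma dT563 : dT 5 6 3 = 0 := by
  norm_num [dT, tm, gm, Matrix.trace, Matrix.mul_apply, Matrix.diag, Fin.sum_univ_succ] <;> ring_nf
lemma dT564 : dT 5 6 4 = 0 := by
  norm_num [dT, tm, gm, Matrix.trace, Matrix.mul_apply, Matrix.diag, Fin.sum_univ_succ] <;> ring_nf
lemma dT565 : dT 5 6 5 = 0 := by
  norm_num [dT, tm, gm, Matrix.trace, Matrix.mul_apply, Matrix.diag, Fin.sum_univ_succ] <;> ring_nf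
lemma dT566 : dT 5 6 6 = 0 := by
  norm_num [dT, tm, gm, Matrix.trace, Matrix.mul_apply, Matrix.diag, Fin.sum_univ_succ] <;> ring_nf
lemma dT577 : dT 5 7 7 = 0 := by
  norm_num [dT, tm, gm, Matrix.trace, Matrix.mul_apply, Matrix.diag, Fin.sum_univ_succ] <;> ring_nf
lemma dT600 : dT 6 0 0 = 0 := by
  norm_num [dT, tm, gm, Matrix.trace, Matrix.mul_apply, Matrix.diag, Fin.sum_univ_succ] <;> ring_nf
lemma dT601 : dT 6 0 1 = 0 := by
  norm_num [dT, tm, gm, Matrix.trace, Matrix.mul_apply, Matrix.diag, Fin.sum_univ_succ] <;> ring_nf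
lemma dT602 : dT 6 0 2 = 0 := by
  norm_num [dT, tm, gm, Matrix.trace, Matrix.mul_apply, Matrix.diag, Fin.sum_univ_succ] <;> ring_nf
lemma dT610 : dT 6 1 0 = 0 := by
  norm_num [dT, tm, gm, Matrix.trace, Matrix.mul_apply, Matrix.diag, Fin.sum_univ_succ] <;> ring_nf
lemma dT611 : dT 6 1 1 = 0 := by
  norm_num [dT, tm, gm, Matrix.trace, Matrix.mul_apply, Matrix.diag, Fin.sum_univ_succ] <;> ring_nf
lemma dT612 : dT 6 1 2 = 0 := by
  norm_num [dT, tm, gm, Matrix.trace, Matrix.mul_apply, Matrix.diag, Fin.sum_univ_succ] <;> ring_nf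
lemma dT620 : dT 6 2 0 = 0 := by
  norm_num [dT, tm, gm, Matrix.trace, Matrix.mul_apply, Matrix.diag, Fin.sum_univ_succ] <;> ring_nf
lemma dT621 : dT 6 2 1 = 0 := by
  norm_num [dT, tm, gm, Matrix.trace, Matrix.mul_apply, Matrix.diag, Fin.sum_univ_succ] <;> ring_nf
lemma dT622 : dT 6 2 2 = 0 := by
  norm_num [dT, tm, gm, Matrix.trace, Matrix.mul_apply, Matrix.diag, Fin.sum_univ_succ] <;> ring_nf
lemma dT633 : dT 6 3 3 = 0 := by
  norm_num [dT, tm, gm, Matrix.trace, Matrix.mul_apply, Matrix.diag, Fin.sum_univ_succ] <;> ring_nf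
lemma dT634 : dT 6 3 4 = 0 := by
  norm_num [dT, tm, gm, Matrix.trace, Matrix.mul_apply, Matrix.diag, Fin.sum_univ_succ] <;> ring_nf
lemma dT635 : dT 6 3 5 = 0 := by
  norm_num [dT, tm, gm, Matrix.trace, Matrix.mul_apply, Matrix.diag, Fin.sum_univ_succ] <;> ring_nf
lemma dT636 : dT 6 3 6 = 0 := by
  norm_num [dT, tm, gm, Matrix.trace, Matrix.mul_apply, Matrix.diag, Fin.sum_univ_succ] <;> ring_nf
lemma dT643 : dT 6 4 3 = 0 := by
  norm_num [dT, tm, gm, Matrix.trace, Matrix.mul_apply, Matrix.diag, Fin.sum_univ_succ] <;> ring_nf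
lemma dT644 : dT 6 4 4 = 0 := by
  norm_num [dT, tm, gm, Matrix.trace, Matrix.mul_apply, Matrix.diag, Fin.sum_univ_succ] <;> ring_nf
lemma dT645 : dT 6 4 5 = 0 := by
  norm_num [dT, tm, gm, Matrix.trace, Matrix.mul_apply, Matrix.diag, Fin.sum_univ_succ] <;> ring_nf
lemma dT646 : dT 6 4 6 = 0 := by
  norm_num [dT, tm, gm, Matrix.trace, Matrix.mul_apply, Matrix.diag, Fin.sum_univ_succ] <;> ring_nf
lemma dT653 : dT 6 5 3 = 0 := by
  norm_num [dT, tm, gm, Matrix.trace, Matrix.mul_apply, Matrix.diag, Fin.sum_univ_succ] <;> ring_nf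
lemma dT654 : dT 6 5 4 = 0 := by
  norm_num [dT, tm, gm, Matrix.trace, Matrix.mul_apply, Matrix.diag, Fin.sum_univ_succ] <;> ring_nf
lemma dT655 : dT 6 5 5 = 0 := by
  norm_num [dT, tm, gm, Matrix.trace, Matrix.mul_apply, Matrix.diag, Fin.sum_univ_succ] <;> ring_nf
lemma dT656 : dT 6 5 6 = 0 := by
  norm_num [dT, tm, gm, Matrix.trace, Matrix.mul_apply, Matrix.diag, Fin.sum_univ_succ] <;> ring_nf
lemma dT663 : dT 6 6 3 = 0 := by
  norm_num [dT, tm, gm, Matrix.trace, Matrix.mul_apply, Matrix.diag, Fin.sum_univ_succ] <;> ring_nf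
lemma dT664 : dT 6 6 4 = 0 := by
  norm_num [dT, tm, gm, Matrix.trace, Matrix.mul_apply, Matrix.diag, Fin.sum_univ_succ] <;> ring_nf
lemma dT665 : dT 6 6 5 = 0 := by
  norm_num [dT, tm, gm, Matrix.trace, Matrix.mul_apply, Matrix.diag, Fin.sum_univ_succ] <;> ring_nf
lemma dT666 : dT 6 6 6 = 0 := by
  norm_num [dT, tm, gm, Matrix.trace, Matrix.mul_apply, Matrix.diag, Fin.sum_univ_succ] <;> ring_nf
lemma dT677 : dT 6 7 7 = 0 := by
  norm_num [dT, tm, gm, Matrix.trace, Matrix.mul_apply, Matrix.diag, Fin.sum_univ_succ] <;> ring_nf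

lemma pow_blk (Λ : Matrix (Fin 8) (Fin 8) ℝ)
    (hblock : ∀ i j : Fin 8, blk i ≠ blk j → Λ i j = 0) :
    ∀ n : ℕ, ∀ i j : Fin 8, blk i ≠ blk j → (Λ ^ n) i j = 0 := by
  intro n
  induction n with
  | zero =>
    intro i j h
    rw [pow_zero]
    exact Matrix.one_apply_ne (fun e => h (by rw [e]))
  | succ n ih =>
    intro i j h
    rw [pow_succ, Matrix.mul_apply]
    apply Finset.sum_eq_zero
    intro k _
    by_cases hk : blk k = blk j
    · rw [ih i k (by rw [hk]; exact h), zero_mul]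
    · rw [hblock k j hk, mul_zero]

lemma blk_one (i : Fin 8) (h : blk i = 1) : i = 3 ∨ i = 4 ∨ i = 5 ∨ i = 6 := by
  revert h; revert i; decide

lemma ne_seven (i : Fin 8) (h : i ≠ 7) :
    i = 0 ∨ i = 1 ∨ i = 2 ∨ i = 3 ∨ i = 4 ∨ i = 5 ∨ i = 6 := by
  revert h; revert i; decide

set_option maxHeartbeats 2000000 in
/-- Complete alignment of all K-vectors for the CP4 block structure: if the symmetric
matrix `Λ` is block-diagonal w.r.t. `{1,2,3} ∪ {4,5,6,7} ∪ {8}` and its `4×4` block `B`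
satisfies `B₄₆ + B₅₇ = 0`, `−B₄₇ + B₅₆ = 0`, `B₄₄ + B₅₅ − B₆₆ − B₇₇ = 0` and
`(B − (¼ Tr B) I₄)² = μ² I₄`, then `K⁽ⁿ⁾ᵢ = Σ_{j,k} d_{ijk}(Λⁿ)_{jk} = 0` for all `n ≥ 1`
and all `i ∈ {1,…,7}`. -/
theorem cp4_block_complete_alignment (Λ : Matrix (Fin 8) (Fin 8) ℝ) (hsym : Λ.IsSymm)
    (hblock : ∀ i j : Fin 8, blk i ≠ blk j → Λ i j = 0)
    (h1 : Λ 3 5 + Λ 4 6 = 0) (h2 : -Λ 3 6 + Λ 4 5 = 0)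
    (h3 : Λ 3 3 + Λ 4 4 - Λ 5 5 - Λ 6 6 = 0)
    (μ : ℝ)
    (hB : (let B : Matrix (Fin 4) (Fin 4) ℝ :=
             Λ.submatrix (fun i : Fin 4 => (⟨i.val + 3, by omega⟩ : Fin 8))
                         (fun j : Fin 4 => (⟨j.val + 3, by omega⟩ : Fin 8));
           (B - ((1 / 4) * B.trace) • (1 : Matrix (Fin 4) (Fin 4) ℝ)) ^ 2
             = (μ ^ 2) • (1 : Matrix (Fin 4) (Fin 4) ℝ))) :
    ∀ n : ℕ, 1 ≤ n → ∀ i : Fin 8, i ≠ 7 → Kvec Λ n i = 0 := by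
  intro n hn i hi7
  -- zero entries of Λ between blocks
  have zL03 : Λ 0 3 = 0 := hblock 0 3 (by decide)
  have zL04 : Λ 0 4 = 0 := hblock 0 4 (by decide)
  have zL05 : Λ 0 5 = 0 := hblock 0 5 (by decide)
  have zL06 : Λ 0 6 = 0 := hblock 0 6 (by decide)
  have zL07 : Λ 0 7 = 0 := hblock 0 7 (by decide)
  have zL13 : Λ 1 3 = 0 := hblock 1 3 (by decide)
  have zL14 : Λ 1 4 = 0 := hblock 1 4 (by decide)
  have zL15 : Λ 1 5 = 0 := hblock 1 5 (by decide)
  have zL16 : Λ 1 6 = 0 := hblock 1 6 (by decide)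
  have zL17 : Λ 1 7 = 0 := hblock 1 7 (by decide)
  have zL23 : Λ 2 3 = 0 := hblock 2 3 (by decide)
  have zL24 : Λ 2 4 = 0 := hblock 2 4 (by decide)
  have zL25 : Λ 2 5 = 0 := hblock 2 5 (by decide)
  have zL26 : Λ 2 6 = 0 := hblock 2 6 (by decide)
  have zL27 : Λ 2 7 = 0 := hblock 2 7 (by decide)
  have zL30 : Λ 3 0 = 0 := hblock 3 0 (by decide)
  have zL31 : Λ 3 1 = 0 := hblock 3 1 (by decide)
  have zL32 : Λ 3 2 = 0 := hblock 3 2 (by decide)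
  have zL37 : Λ 3 7 = 0 := hblock 3 7 (by decide)
  have zL40 : Λ 4 0 = 0 := hblock 4 0 (by decide)
  have zL41 : Λ 4 1 = 0 := hblock 4 1 (by decide)
  have zL42 : Λ 4 2 = 0 := hblock 4 2 (by decide)
  have zL47 : Λ 4 7 = 0 := hblock 4 7 (by decide)
  have zL50 : Λ 5 0 = 0 := hblock 5 0 (by decide)
  have zL51 : Λ 5 1 = 0 := hblock 5 1 (by decide)
  have zL52 : Λ 5 2 = 0 := hblock 5 2 (by decide)
  have zL57 : Λ 5 7 = 0 := hblock 5 7 (by decide)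
  have zL60 : Λ 6 0 = 0 := hblock 6 0 (by decide)
  have zL61 : Λ 6 1 = 0 := hblock 6 1 (by decide)
  have zL62 : Λ 6 2 = 0 := hblock 6 2 (by decide)
  have zL67 : Λ 6 7 = 0 := hblock 6 7 (by decide)
  have zL70 : Λ 7 0 = 0 := hblock 7 0 (by decide)
  have zL71 : Λ 7 1 = 0 := hblock 7 1 (by decide)
  have zL72 : Λ 7 2 = 0 := hblock 7 2 (by decide)
  have zL73 : Λ 7 3 = 0 := hblock 7 3 (by decide)
  have zL74 : Λ 7 4 = 0 := hblock 7 4 (by decide)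
  have zL75 : Λ 7 5 = 0 := hblock 7 5 (by decide)
  have zL76 : Λ 7 6 = 0 := hblock 7 6 (by decide)
  have hfun : (fun i : Fin 4 => ((⟨i.val + 3, by omega⟩ : Fin 8))) = ![3,4,5,6] := by
    funext i; fin_cases i <;> rfl
  have hB2 : (Λ.submatrix ![3,4,5,6] ![3,4,5,6]
      - ((1 / 4) * (Λ.submatrix ![3,4,5,6] ![3,4,5,6]).trace) • (1 : Matrix (Fin 4) (Fin 4) ℝ)) ^ 2
      = (μ ^ 2) • (1 : Matrix (Fin 4) (Fin 4) ℝ) := by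
    rw [← hfun]; exact hB
  have he : ∀ p q : Fin 4,
      ((Λ.submatrix ![3,4,5,6] ![3,4,5,6]
      - ((1 / 4) * (Λ.submatrix ![3,4,5,6] ![3,4,5,6]).trace) • (1 : Matrix (Fin 4) (Fin 4) ℝ)) ^ 2) p q
      = ((μ ^ 2) • (1 : Matrix (Fin 4) (Fin 4) ℝ)) p q := fun p q => by rw [hB2]
  have he00 := he 0 0
  simp [pow_two, Matrix.mul_apply, Matrix.sub_apply, Matrix.smul_apply, Matrix.one_apply,
    Matrix.submatrix_apply, Matrix.trace, Matrix.diag, Fin.sum_univ_four, smul_eq_mul, -Matrix.submatrix_cons_row] at he00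
  have he01 := he 0 1
  simp [pow_two, Matrix.mul_apply, Matrix.sub_apply, Matrix.smul_apply, Matrix.one_apply,
    Matrix.submatrix_apply, Matrix.trace, Matrix.diag, Fin.sum_univ_four, smul_eq_mul, -Matrix.submatrix_cons_row] at he01
  have he02 := he 0 2
  simp [pow_two, Matrix.mul_apply, Matrix.sub_apply, Matrix.smul_apply, Matrix.one_apply,
    Matrix.submatrix_apply, Matrix.trace, Matrix.diag, Fin.sum_univ_four, smul_eq_mul, -Matrix.submatrix_cons_row] at he02
  have he03 := he 0 3
  simp [pow_two, Matrix.mul_apply, Matrix.sub_apply, Matrix.smul_apply, Matrix.one_apply,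
    Matrix.submatrix_apply, Matrix.trace, Matrix.diag, Fin.sum_univ_four, smul_eq_mul, -Matrix.submatrix_cons_row] at he03
  have he10 := he 1 0
  simp [pow_two, Matrix.mul_apply, Matrix.sub_apply, Matrix.smul_apply, Matrix.one_apply,
    Matrix.submatrix_apply, Matrix.trace, Matrix.diag, Fin.sum_univ_four, smul_eq_mul, -Matrix.submatrix_cons_row] at he10
  have he11 := he 1 1
  simp [pow_two, Matrix.mul_apply, Matrix.sub_apply, Matrix.smul_apply, Matrix.one_apply,
    Matrix.submatrix_apply, Matrix.trace, Matrix.diag, Fin.sum_univ_four, smul_eq_mul, -Matrix.submatrix_cons_row] at he11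
  have he12 := he 1 2
  simp [pow_two, Matrix.mul_apply, Matrix.sub_apply, Matrix.smul_apply, Matrix.one_apply,
    Matrix.submatrix_apply, Matrix.trace, Matrix.diag, Fin.sum_univ_four, smul_eq_mul, -Matrix.submatrix_cons_row] at he12
  have he13 := he 1 3
  simp [pow_two, Matrix.mul_apply, Matrix.sub_apply, Matrix.smul_apply, Matrix.one_apply,
    Matrix.submatrix_apply, Matrix.trace, Matrix.diag, Fin.sum_univ_four, smul_eq_mul, -Matrix.submatrix_cons_row] at he13
  have he20 := he 2 0
  simp [pow_two, Matrix.mul_apply, Matrix.sub_apply, Matrix.smul_apply, Matrix.one_apply,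
    Matrix.submatrix_apply, Matrix.trace, Matrix.diag, Fin.sum_univ_four, smul_eq_mul, -Matrix.submatrix_cons_row] at he20
  have he21 := he 2 1
  simp [pow_two, Matrix.mul_apply, Matrix.sub_apply, Matrix.smul_apply, Matrix.one_apply,
    Matrix.submatrix_apply, Matrix.trace, Matrix.diag, Fin.sum_univ_four, smul_eq_mul, -Matrix.submatrix_cons_row] at he21
  have he22 := he 2 2
  simp [pow_two, Matrix.mul_apply, Matrix.sub_apply, Matrix.smul_apply, Matrix.one_apply,
    Matrix.submatrix_apply, Matrix.trace, Matrix.diag, Fin.sum_univ_four, smul_eq_mul, -Matrix.submatrix_cons_row] at he22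
  have he23 := he 2 3
  simp [pow_two, Matrix.mul_apply, Matrix.sub_apply, Matrix.smul_apply, Matrix.one_apply,
    Matrix.submatrix_apply, Matrix.trace, Matrix.diag, Fin.sum_univ_four, smul_eq_mul, -Matrix.submatrix_cons_row] at he23
  have he30 := he 3 0
  simp [pow_two, Matrix.mul_apply, Matrix.sub_apply, Matrix.smul_apply, Matrix.one_apply,
    Matrix.submatrix_apply, Matrix.trace, Matrix.diag, Fin.sum_univ_four, smul_eq_mul, -Matrix.submatrix_cons_row] at he30
  have he31 := he 3 1
  simp [pow_two, Matrix.mul_apply, Matrix.sub_apply, Matrix.smul_apply, Matrix.one_apply,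
    Matrix.submatrix_apply, Matrix.trace, Matrix.diag, Fin.sum_univ_four, smul_eq_mul, -Matrix.submatrix_cons_row] at he31
  have he32 := he 3 2
  simp [pow_two, Matrix.mul_apply, Matrix.sub_apply, Matrix.smul_apply, Matrix.one_apply,
    Matrix.submatrix_apply, Matrix.trace, Matrix.diag, Fin.sum_univ_four, smul_eq_mul, -Matrix.submatrix_cons_row] at he32
  have he33 := he 3 3
  simp [pow_two, Matrix.mul_apply, Matrix.sub_apply, Matrix.smul_apply, Matrix.one_apply,
    Matrix.submatrix_apply, Matrix.trace, Matrix.diag, Fin.sum_univ_four, smul_eq_mul, -Matrix.submatrix_cons_row] at he33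
  have hsq : ∀ i j : Fin 8, blk i = 1 → blk j = 1 →
      (Λ ^ 2) i j = 2 * ((Λ 3 3 + Λ 4 4 + Λ 5 5 + Λ 6 6)/4) * Λ i j
        + (μ ^ 2 - ((Λ 3 3 + Λ 4 4 + Λ 5 5 + Λ 6 6)/4) ^ 2) * (if i = j then 1 else 0) := by
    intro i j hi hj
    rcases blk_one i hi with rfl | rfl | rfl | rfl <;>
      rcases blk_one j hj with rfl | rfl | rfl | rfl <;>
    · rw [pow_two, Matrix.mul_apply]
      simp only [Fin.sum_univ_eight,
        zL30, zL31, zL32, zL37, zL40, zL41, zL42, zL47, zL50, zL51, zL52, zL57, zL60, zL61, zL62, zL67, zero_mul, mul_zero, add_zero, zero_add, Fin.reduceEq, reduceIte]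
      first | linear_combination he00 | linear_combination he01 | linear_combination he02 | linear_combination he03 | linear_combination he10 | linear_combination he11 | linear_combination he12 | linear_combination he13 | linear_combination he20 | linear_combination he21 | linear_combination he22 | linear_combination he23 | linear_combination he30 | linear_combination he31 | linear_combination he32 | linear_combination he33
  have hspan : ∀ m : ℕ, ∃ a b : ℝ, ∀ i j : Fin 8, blk i = 1 → blk j = 1 →
      (Λ ^ (m+1)) i j = a * (if i = j then 1 else 0) + b * Λ i j := by
    intro m
    induction m with
    | zero => exact ⟨0, 1, fun i j _ _ => by simp [pow_one]⟩
    | succ m ih =>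
      obtain ⟨a, b, hab⟩ := ih
      refine ⟨b * (μ ^ 2 - ((Λ 3 3 + Λ 4 4 + Λ 5 5 + Λ 6 6)/4) ^ 2),
        a + 2 * b * ((Λ 3 3 + Λ 4 4 + Λ 5 5 + Λ 6 6)/4), fun i j hi hj => ?_⟩
      have hstep : (Λ ^ (m+1+1)) i j = ∑ k, (Λ ^ (m+1)) i k * Λ k j := by
        rw [pow_succ, Matrix.mul_apply]
      rw [hstep]
      have hterm : ∀ k : Fin 8, (Λ ^ (m+1)) i k * Λ k j
          = a * ((if i = k then 1 else 0) * Λ k j) + b * (Λ i k * Λ k j) := by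
        intro k
        by_cases hk : blk k = 1
        · rw [hab i k hi hk]; ring
        · rw [hblock k j (by rw [hj]; exact hk)]; ring
      rw [Finset.sum_congr rfl (fun k _ => hterm k), Finset.sum_add_distrib,
        ← Finset.mul_sum, ← Finset.mul_sum]
      have e1 : ∑ k : Fin 8, (if i = k then (1:ℝ) else 0) * Λ k j = Λ i j := by
        simp [ite_mul, Finset.sum_ite_eq]
      have e2 : ∑ k : Fin 8, Λ i k * Λ k j = (Λ ^ 2) i j := by
        rw [pow_two, Matrix.mul_apply]
      rw [e1, e2, hsq i j hi hj]
      ring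
  obtain ⟨m, rfl⟩ : ∃ m, n = m + 1 := ⟨n - 1, by omega⟩
  obtain ⟨a, b, hab⟩ := hspan m
  have hP := pow_blk Λ hblock (m+1)
  have zM03 : (Λ ^ (m+1)) 0 3 = 0 := hP 0 3 (by decide)
  have zM04 : (Λ ^ (m+1)) 0 4 = 0 := hP 0 4 (by decide)
  have zM05 : (Λ ^ (m+1)) 0 5 = 0 := hP 0 5 (by decide)
  have zM06 : (Λ ^ (m+1)) 0 6 = 0 := hP 0 6 (by decide)
  have zM07 : (Λ ^ (m+1)) 0 7 = 0 := hP 0 7 (by decide)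
  have zM13 : (Λ ^ (m+1)) 1 3 = 0 := hP 1 3 (by decide)
  have zM14 : (Λ ^ (m+1)) 1 4 = 0 := hP 1 4 (by decide)
  have zM15 : (Λ ^ (m+1)) 1 5 = 0 := hP 1 5 (by decide)
  have zM16 : (Λ ^ (m+1)) 1 6 = 0 := hP 1 6 (by decide)
  have zM17 : (Λ ^ (m+1)) 1 7 = 0 := hP 1 7 (by decide)
  have zM23 : (Λ ^ (m+1)) 2 3 = 0 := hP 2 3 (by decide)
  have zM24 : (Λ ^ (m+1)) 2 4 = 0 := hP 2 4 (by decide)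
  have zM25 : (Λ ^ (m+1)) 2 5 = 0 := hP 2 5 (by decide)
  have zM26 : (Λ ^ (m+1)) 2 6 = 0 := hP 2 6 (by decide)
  have zM27 : (Λ ^ (m+1)) 2 7 = 0 := hP 2 7 (by decide)
  have zM30 : (Λ ^ (m+1)) 3 0 = 0 := hP 3 0 (by decide)
  have zM31 : (Λ ^ (m+1)) 3 1 = 0 := hP 3 1 (by decide)
  have zM32 : (Λ ^ (m+1)) 3 2 = 0 := hP 3 2 (by decide)
  have zM37 : (Λ ^ (m+1)) 3 7 = 0 := hP 3 7 (by decide)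
  have zM40 : (Λ ^ (m+1)) 4 0 = 0 := hP 4 0 (by decide)
  have zM41 : (Λ ^ (m+1)) 4 1 = 0 := hP 4 1 (by decide)
  have zM42 : (Λ ^ (m+1)) 4 2 = 0 := hP 4 2 (by decide)
  have zM47 : (Λ ^ (m+1)) 4 7 = 0 := hP 4 7 (by decide)
  have zM50 : (Λ ^ (m+1)) 5 0 = 0 := hP 5 0 (by decide)
  have zM51 : (Λ ^ (m+1)) 5 1 = 0 := hP 5 1 (by decide)
  have zM52 : (Λ ^ (m+1)) 5 2 = 0 := hP 5 2 (by decide)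
  have zM57 : (Λ ^ (m+1)) 5 7 = 0 := hP 5 7 (by decide)
  have zM60 : (Λ ^ (m+1)) 6 0 = 0 := hP 6 0 (by decide)
  have zM61 : (Λ ^ (m+1)) 6 1 = 0 := hP 6 1 (by decide)
  have zM62 : (Λ ^ (m+1)) 6 2 = 0 := hP 6 2 (by decide)
  have zM67 : (Λ ^ (m+1)) 6 7 = 0 := hP 6 7 (by decide)
  have zM70 : (Λ ^ (m+1)) 7 0 = 0 := hP 7 0 (by decide)
  have zM71 : (Λ ^ (m+1)) 7 1 = 0 := hP 7 1 (by decide)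
  have zM72 : (Λ ^ (m+1)) 7 2 = 0 := hP 7 2 (by decide)
  have zM73 : (Λ ^ (m+1)) 7 3 = 0 := hP 7 3 (by decide)
  have zM74 : (Λ ^ (m+1)) 7 4 = 0 := hP 7 4 (by decide)
  have zM75 : (Λ ^ (m+1)) 7 5 = 0 := hP 7 5 (by decide)
  have zM76 : (Λ ^ (m+1)) 7 6 = 0 := hP 7 6 (by decide)
  have hM33 : (Λ ^ (m+1)) 3 3 = a + b * Λ 3 3 := by
    rw [hab 3 3 (by decide) (by decide), if_pos rfl]; ring
  have hM34 : (Λ ^ (m+1)) 3 4 = b * Λ 3 4 := by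
    rw [hab 3 4 (by decide) (by decide), if_neg (by decide)]; ring
  have hM35 : (Λ ^ (m+1)) 3 5 = b * Λ 3 5 := by
    rw [hab 3 5 (by decide) (by decide), if_neg (by decide)]; ring
  have hM36 : (Λ ^ (m+1)) 3 6 = b * Λ 3 6 := by
    rw [hab 3 6 (by decide) (by decide), if_neg (by decide)]; ring
  have hM43 : (Λ ^ (m+1)) 4 3 = b * Λ 4 3 := by
    rw [hab 4 3 (by decide) (by decide), if_neg (by decide)]; ring
  have hM44 : (Λ ^ (m+1)) 4 4 = a + b * Λ 4 4 := by
    rw [hab 4 4 (by decide) (by decide), if_pos rfl]; ring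
  have hM45 : (Λ ^ (m+1)) 4 5 = b * Λ 4 5 := by
    rw [hab 4 5 (by decide) (by decide), if_neg (by decide)]; ring
  have hM46 : (Λ ^ (m+1)) 4 6 = b * Λ 4 6 := by
    rw [hab 4 6 (by decide) (by decide), if_neg (by decide)]; ring
  have hM53 : (Λ ^ (m+1)) 5 3 = b * Λ 5 3 := by
    rw [hab 5 3 (by decide) (by decide), if_neg (by decide)]; ring
  have hM54 : (Λ ^ (m+1)) 5 4 = b * Λ 5 4 := by
    rw [hab 5 4 (by decide) (by decide), if_neg (by decide)]; ring
  have hM55 : (Λ ^ (m+1)) 5 5 = a + b * Λ 5 5 := by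
    rw [hab 5 5 (by decide) (by decide), if_pos rfl]; ring
  have hM56 : (Λ ^ (m+1)) 5 6 = b * Λ 5 6 := by
    rw [hab 5 6 (by decide) (by decide), if_neg (by decide)]; ring
  have hM63 : (Λ ^ (m+1)) 6 3 = b * Λ 6 3 := by
    rw [hab 6 3 (by decide) (by decide), if_neg (by decide)]; ring
  have hM64 : (Λ ^ (m+1)) 6 4 = b * Λ 6 4 := by
    rw [hab 6 4 (by decide) (by decide), if_neg (by decide)]; ring
  have hM65 : (Λ ^ (m+1)) 6 5 = b * Λ 6 5 := by
    rw [hab 6 5 (by decide) (by decide), if_neg (by decide)]; ring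
  have hM66 : (Λ ^ (m+1)) 6 6 = a + b * Λ 6 6 := by
    rw [hab 6 6 (by decide) (by decide), if_pos rfl]; ring
  have hS53 : Λ 5 3 = Λ 3 5 := hsym.apply 3 5
  have hS64 : Λ 6 4 = Λ 4 6 := hsym.apply 4 6
  have hS63 : Λ 6 3 = Λ 3 6 := hsym.apply 3 6
  have hS54 : Λ 5 4 = Λ 4 5 := hsym.apply 4 5
  rcases ne_seven i hi7 with rfl | rfl | rfl | rfl | rfl | rfl | rfl <;>
  · simp only [Kvec, Fin.sum_univ_eight, zM03, zM04, zM05, zM06, zM07, zM13, zM14, zM15, zM16, zM17, zM23, zM24, zM25, zM26, zM27, zM30, zM31, zM32, zM37, zM40, zM41, zM42, zM47, zM50, zM51, zM52, zM57, zM60, zM61, zM62, zM67, zM70, zM71, zM72, zM73, zM74, zM75, zM76, hM33, hM34, hM35, hM36, hM43, hM44, hM45, hM46, hM53, hM54, hM55, hM56, hM63, hM64, hM65, hM66,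
      dT000, dT001, dT002, dT010, dT011, dT012, dT020, dT021, dT022, dT033, dT034, dT035, dT036, dT043, dT044, dT045, dT046, dT053, dT054, dT055, dT056, dT063, dT064, dT065, dT066, dT077, dT100, dT101, dT102, dT110, dT111, dT112, dT120, dT121, dT122, dT133, dT134, dT135, dT136, dT143, dT144, dT145, dT146, dT153, dT154, dT155, dT156, dT163, dT164, dT165, dT166, dT177, dT200, dT201, dT202, dT210, dT211, dT212, dT220, dT221, dT222, dT233, dT234, dT235, dT236, dT243, dT244, dT245, dT246, dT253, dT254, dT255, dT256, dT263, dT264, dT265, dT266, dT277, dT300, dT301, dT302, dT310, dT311, dT312, dT320, dT321, dT322, dT333, dT334, dT335, dT336, dT343, dT344, dT345, dT346, dT353, dT354, dT355, dT356, dT363, dT364, dT365, dT366, dT377, dT400, dT401, dT402, dT410, dT411, dT412, dT420, dT421, dT422, dT433, dT434, dT435, dT436, dT443, dT444, dT445, dT446, dT453, dT454, dT455, dT456, dT463, dT464, dT465, dT466, dT477, dT500, dT501, dT502, dT510, dT511, dT512, dT520, dT521, dT522, dT533, dT534, dT535, dT536, dT543, dT544, dT545, dT546, dT553, dT554, dT555,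 dT556, dT563, dT564, dT565, dT566, dT577, dT600, dT601, dT602, dT610, dT611, dT612, dT620, dT621, dT622, dT633, dT634, dT635, dT636, dT643, dT644, dT645, dT646, dT653, dT654, dT655, dT656, dT663, dT664, dT665, dT666, dT677, hS53, hS64, hS63, hS54]
    first
      | linear_combination (0 : ℝ)
      | linear_combination b * h1
      | linear_combination b * h2
      | linear_combination b * h3 / 2
      | linear_combination (-b) * h1
      | linear_combination (-b) * h2
      | linear_combination ((-b) * h3) / 2
end
end

section
/- Classification of CP2 transformations commuting with CP4: let X = [[0,1,0],[−1,0,0],[0,0,1]]. A unitary 3×3 matrix X₂ satisfies X₂·conj(X₂) = 1 and X₂·conj(X)·X₂ = X if and only if there exist real numbers α, φ and a sign ε ∈ {+1,−1} such that X₂ = [[e^{iα}·cos φ, i·sin φ, 0],[i·sin φ, e^{−iα}·cos φ, 0],[0, 0, ε]]. Likewise (non-commuting case), a unitary 3×3 matrix X₂ satisfies X₂·conj(X₂) = 1 and X₂·conj(X)·X₂ = Xᵀ if and only if there exist real numbers α, φ and a sign ε ∈ {+1,−1} such that X₂ = [[e^{iα}·cos φ, sin φ, 0],[sin φ, −e^{−iα}·cos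 φ, 0],[0, 0, ε]]. -/
open Matrix Complex BigOperators

noncomputable section

private lemma xmap : Xcp4.map (starRingEnd ℂ) = Xcp4 := by
  ext i j; fin_cases i <;> fin_cases j <;>
    simp [Xcp4, Matrix.map_apply, Matrix.vecHead, Matrix.vecTail]

private lemma class1 (a b d : ℂ)
    (e1 : a * (starRingEnd ℂ) a + b * (starRingEnd ℂ) b = 1)
    (e2 : a * (starRingEnd ℂ) b + b * (starRingEnd ℂ) d = 0)
    (e3 : b * (starRingEnd ℂ) a + d * (starRingEnd ℂ) b = 0)
    (e4 : b * (starRingEnd ℂ) b + d * (starRingEnd ℂ) d = 1)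
    (h4 : a * d - b * b = 1) :
    ∃ α φ : ℝ, a = Complex.exp (I * α) * Real.cos φ ∧ b = I * Real.sin φ ∧
      d = Complex.exp (-(I * α)) * Real.cos φ := by
  have hd : (starRingEnd ℂ) a = d := by
    linear_combination (-(starRingEnd ℂ) a) * h4 + d * e1 - b * e3
  have hb : (starRingEnd ℂ) b = -b := by
    linear_combination (-(starRingEnd ℂ) b) * h4 + d * e2 - b * e4
  have hbre : b.re = 0 := by
    have h := congrArg Complex.re hb
    simp at h; linarith
  set s := b.im with hs
  have hbval : b = I * (s : ℂ) := by
    apply Complex.ext <;> simp [hbre, hs]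
  have hnb : Complex.normSq b = s ^ 2 := by
    simp [Complex.normSq_apply, hbre]; ring
  have hna : Complex.normSq a = 1 - s ^ 2 := by
    have h := e1
    rw [Complex.mul_conj, Complex.mul_conj] at h
    have h2 : (Complex.normSq a : ℝ) + Complex.normSq b = 1 := by exact_mod_cast h
    rw [hnb] at h2; linarith
  have hs1 : s ^ 2 ≤ 1 := by nlinarith [Complex.normSq_nonneg a]
  have ha : a = Complex.exp (I * a.arg) * Real.cos (Real.arcsin s) := by
    have habs : (‖a‖ : ℝ) = Real.cos (Real.arcsin s) := by
      rw [Real.cos_arcsin, Complex.norm_def, hna]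
    have h := Complex.norm_mul_exp_arg_mul_I a
    rw [habs] at h
    rw [mul_comm I (a.arg : ℂ)]
    linear_combination -h
  obtain ⟨α, hα⟩ : ∃ α : ℝ, a = Complex.exp (I * α) * Real.cos (Real.arcsin s) := ⟨a.arg, ha⟩
  have hc : (starRingEnd ℂ) (I * (α : ℂ)) = -(I * α) := by
    rw [RingHom.map_mul, Complex.conj_I, Complex.conj_ofReal]; ring
  refine ⟨α, Real.arcsin s, hα, ?_, ?_⟩
  · rw [Real.sin_arcsin (by nlinarith) (by nlinarith)]; exact hbval
  · rw [← hd, hα, RingHom.map_mul, ← Complex.exp_conj, hc, Complex.conj_ofReal]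

private lemma class2 (a b d : ℂ)
    (e1 : a * (starRingEnd ℂ) a + b * (starRingEnd ℂ) b = 1)
    (e2 : a * (starRingEnd ℂ) b + b * (starRingEnd ℂ) d = 0)
    (e3 : b * (starRingEnd ℂ) a + d * (starRingEnd ℂ) b = 0)
    (e4 : b * (starRingEnd ℂ) b + d * (starRingEnd ℂ) d = 1)
    (h4 : a * d - b * b = -1) :
    ∃ α φ : ℝ, a = Complex.exp (I * α) * Real.cos φ ∧ b = (Real.sin φ : ℂ) ∧
      d = -(Complex.exp (-(I * α)) * Real.cos φ) := by
  have hd : (starRingEnd ℂ) a = -d := by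
    linear_combination ((starRingEnd ℂ) a) * h4 - d * e1 + b * e3
  have hb : (starRingEnd ℂ) b = b := by
    linear_combination ((starRingEnd ℂ) b) * h4 - d * e2 + b * e4
  have hbim : b.im = 0 := by
    have h := congrArg Complex.im hb
    simp at h; linarith
  set s := b.re with hs
  have hbval : b = (s : ℂ) := by
    apply Complex.ext <;> simp [hbim, hs]
  have hnb : Complex.normSq b = s ^ 2 := by
    simp [Complex.normSq_apply, hbim]; ring
  have hna : Complex.normSq a = 1 - s ^ 2 := by
    have h := e1
    rw [Complex.mul_conj, Complex.mul_conj] at h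
    have h2 : (Complex.normSq a : ℝ) + Complex.normSq b = 1 := by exact_mod_cast h
    rw [hnb] at h2; linarith
  have hs1 : s ^ 2 ≤ 1 := by nlinarith [Complex.normSq_nonneg a]
  have ha : a = Complex.exp (I * a.arg) * Real.cos (Real.arcsin s) := by
    have habs : (‖a‖ : ℝ) = Real.cos (Real.arcsin s) := by
      rw [Real.cos_arcsin, Complex.norm_def, hna]
    have h := Complex.norm_mul_exp_arg_mul_I a
    rw [habs] at h
    rw [mul_comm I (a.arg : ℂ)]
    linear_combination -h
  obtain ⟨α, hα⟩ : ∃ α : ℝ, a = Complex.exp (I * α) * Real.cos (Real.arcsin s) := ⟨a.arg, ha⟩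
  have hc : (starRingEnd ℂ) (I * (α : ℂ)) = -(I * α) := by
    rw [RingHom.map_mul, Complex.conj_I, Complex.conj_ofReal]; ring
  refine ⟨α, Real.arcsin s, hα, ?_, ?_⟩
  · rw [Real.sin_arcsin (by nlinarith) (by nlinarith)]; exact hbval
  · have hdd : d = -((starRingEnd ℂ) a) := by rw [hd]; ring
    rw [hdd, hα, RingHom.map_mul, ← Complex.exp_conj, hc, Complex.conj_ofReal]

private lemma bwd1 (α φ ε : ℝ) (hε : ε = 1 ∨ ε = -1) :
    (!![Complex.exp (I * α) * Real.cos φ, I * Real.sin φ, 0;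
        I * Real.sin φ, Complex.exp (-(I * α)) * Real.cos φ, 0;
        0, 0, (ε : ℂ)] : Matrix (Fin 3) (Fin 3) ℂ) *
      (!![Complex.exp (I * α) * Real.cos φ, I * Real.sin φ, 0;
        I * Real.sin φ, Complex.exp (-(I * α)) * Real.cos φ, 0;
        0, 0, (ε : ℂ)]).map (starRingEnd ℂ) = 1 ∧
    (!![Complex.exp (I * α) * Real.cos φ, I * Real.sin φ, 0;
        I * Real.sin φ, Complex.exp (-(I * α)) * Real.cos φ, 0;
        0, 0, (ε : ℂ)] : Matrix (Fin 3) (Fin 3) ℂ) * Xcp4.map (starRingEnd ℂ) *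
      !![Complex.exp (I * α) * Real.cos φ, I * Real.sin φ, 0;
        I * Real.sin φ, Complex.exp (-(I * α)) * Real.cos φ, 0;
        0, 0, (ε : ℂ)] = Xcp4 := by
  have hzw : Complex.exp (I * α) * Complex.exp (-(I * α)) = 1 := by
    rw [← Complex.exp_add]; simp
  have hf : (ε : ℂ) * (ε : ℂ) = 1 := by rcases hε with rfl | rfl <;> norm_num
  have hcs : (Complex.cos φ) ^ 2 + (Complex.sin φ) ^ 2 = 1 := Complex.cos_sq_add_sin_sq _
  have hI : (I : ℂ) * I = -1 := Complex.I_mul_I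
  have hsz : (starRingEnd ℂ) (Complex.exp (I * α)) = Complex.exp (-(I * α)) := by
    rw [← Complex.exp_conj]; simp
  have hsw : (starRingEnd ℂ) (Complex.exp (-(I * α))) = Complex.exp (I * α) := by
    rw [← Complex.exp_conj]; simp
  have hsc : (starRingEnd ℂ) (Complex.cos φ) = Complex.cos φ := by
    rw [← Complex.ofReal_cos, Complex.conj_ofReal]
  have hss : (starRingEnd ℂ) (Complex.sin φ) = Complex.sin φ := by
    rw [← Complex.ofReal_sin, Complex.conj_ofReal]
  constructor
  · ext i j
    fin_cases i <;> fin_cases j <;>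
      simp [Matrix.mul_apply, Matrix.map_apply, Matrix.one_apply,
        Fin.sum_univ_three, hsz, hsw, hsc, hss, hf, Complex.conj_ofReal,
        Matrix.vecHead, Matrix.vecTail] <;>
      first
        | ring1
        | linear_combination hcs + (Complex.cos (φ:ℂ)) ^ 2 * hzw
        | linear_combination -(hcs + (Complex.cos (φ:ℂ)) ^ 2 * hzw)
        | linear_combination hcs + (Complex.cos (φ:ℂ)) ^ 2 * hzw - (Complex.sin (φ:ℂ)) ^ 2 * hI
        | linear_combination -(hcs + (Complex.cos (φ:ℂ)) ^ 2 * hzw - (Complex.sin (φ:ℂ)) ^ 2 * hI)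
  · rw [xmap]
    ext i j
    fin_cases i <;> fin_cases j <;>
      simp [Xcp4, Matrix.mul_apply, Matrix.map_apply, Matrix.one_apply,
        Fin.sum_univ_three, hf, Matrix.vecHead, Matrix.vecTail] <;>
      first
        | ring1
        | linear_combination hcs + (Complex.cos (φ:ℂ)) ^ 2 * hzw
        | linear_combination -(hcs + (Complex.cos (φ:ℂ)) ^ 2 * hzw)
        | linear_combination hcs + (Complex.cos (φ:ℂ)) ^ 2 * hzw - (Complex.sin (φ:ℂ)) ^ 2 * hI
        | linear_combination -(hcs + (Complex.cos (φ:ℂ)) ^ 2 * hzw - (Complex.sin (φ:ℂ)) ^ 2 * hI)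

private lemma bwd2 (α φ ε : ℝ) (hε : ε = 1 ∨ ε = -1) :
    (!![Complex.exp (I * α) * Real.cos φ, (Real.sin φ : ℂ), 0;
        (Real.sin φ : ℂ), -(Complex.exp (-(I * α)) * Real.cos φ), 0;
        0, 0, (ε : ℂ)] : Matrix (Fin 3) (Fin 3) ℂ) *
      (!![Complex.exp (I * α) * Real.cos φ, (Real.sin φ : ℂ), 0;
        (Real.sin φ : ℂ), -(Complex.exp (-(I * α)) * Real.cos φ), 0;
        0, 0, (ε : ℂ)]).map (starRingEnd ℂ) = 1 ∧
    (!![Complex.exp (I * α) * Real.cos φ, (Real.sin φ : ℂ), 0;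
        (Real.sin φ : ℂ), -(Complex.exp (-(I * α)) * Real.cos φ), 0;
        0, 0, (ε : ℂ)] : Matrix (Fin 3) (Fin 3) ℂ) * Xcp4.map (starRingEnd ℂ) *
      !![Complex.exp (I * α) * Real.cos φ, (Real.sin φ : ℂ), 0;
        (Real.sin φ : ℂ), -(Complex.exp (-(I * α)) * Real.cos φ), 0;
        0, 0, (ε : ℂ)] = Xcp4ᵀ := by
  have hzw : Complex.exp (I * α) * Complex.exp (-(I * α)) = 1 := by
    rw [← Complex.exp_add]; simp
  have hf : (ε : ℂ) * (ε : ℂ) = 1 := by rcases hε with rfl | rfl <;> norm_num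
  have hcs : (Complex.cos φ) ^ 2 + (Complex.sin φ) ^ 2 = 1 := Complex.cos_sq_add_sin_sq _
  have hI : (I : ℂ) * I = -1 := Complex.I_mul_I
  have hsz : (starRingEnd ℂ) (Complex.exp (I * α)) = Complex.exp (-(I * α)) := by
    rw [← Complex.exp_conj]; simp
  have hsw : (starRingEnd ℂ) (Complex.exp (-(I * α))) = Complex.exp (I * α) := by
    rw [← Complex.exp_conj]; simp
  have hsc : (starRingEnd ℂ) (Complex.cos φ) = Complex.cos φ := by
    rw [← Complex.ofReal_cos, Complex.conj_ofReal]
  have hss : (starRingEnd ℂ) (Complex.sin φ) = Complex.sin φ := by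
    rw [← Complex.ofReal_sin, Complex.conj_ofReal]
  constructor
  · ext i j
    fin_cases i <;> fin_cases j <;>
      simp [Matrix.mul_apply, Matrix.map_apply, Matrix.one_apply,
        Fin.sum_univ_three, hsz, hsw, hsc, hss, hf, Complex.conj_ofReal,
        Matrix.vecHead, Matrix.vecTail] <;>
      first
        | ring1
        | linear_combination hcs + (Complex.cos (φ:ℂ)) ^ 2 * hzw
        | linear_combination -(hcs + (Complex.cos (φ:ℂ)) ^ 2 * hzw)
        | linear_combination hcs + (Complex.cos (φ:ℂ)) ^ 2 * hzw - (Complex.sin (φ:ℂ)) ^ 2 * hI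
        | linear_combination -(hcs + (Complex.cos (φ:ℂ)) ^ 2 * hzw - (Complex.sin (φ:ℂ)) ^ 2 * hI)
  · rw [xmap]
    ext i j
    fin_cases i <;> fin_cases j <;>
      simp [Xcp4, Matrix.mul_apply, Matrix.map_apply, Matrix.one_apply, Matrix.transpose_apply,
        Fin.sum_univ_three, hf, Matrix.vecHead, Matrix.vecTail] <;>
      first
        | ring1
        | linear_combination hcs + (Complex.cos (φ:ℂ)) ^ 2 * hzw
        | linear_combination -(hcs + (Complex.cos (φ:ℂ)) ^ 2 * hzw)
        | linear_combination hcs + (Complex.cos (φ:ℂ)) ^ 2 * hzw - (Complex.sin (φ:ℂ)) ^ 2 * hI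
        | linear_combination -(hcs + (Complex.cos (φ:ℂ)) ^ 2 * hzw - (Complex.sin (φ:ℂ)) ^ 2 * hI)

private lemma fwd1 (X2 : Matrix (Fin 3) (Fin 3) ℂ) (h1 : X2 * X2ᴴ = 1)
    (h2 : X2 * X2.map (starRingEnd ℂ) = 1)
    (h3 : X2 * Xcp4.map (starRingEnd ℂ) * X2 = Xcp4) :
    ∃ α φ ε : ℝ, (ε = 1 ∨ ε = -1) ∧
      X2 = !![Complex.exp (I * α) * Real.cos φ, I * Real.sin φ, 0;
              I * Real.sin φ, Complex.exp (-(I * α)) * Real.cos φ, 0;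
              0, 0, (ε : ℂ)] := by
  have hH : X2ᴴ = X2.map (starRingEnd ℂ) := by
    calc X2ᴴ = X2ᴴ * (X2 * X2.map (starRingEnd ℂ)) := by rw [h2, mul_one]
    _ = (X2ᴴ * X2) * X2.map (starRingEnd ℂ) := by rw [mul_assoc]
    _ = X2.map (starRingEnd ℂ) := by rw [mul_eq_one_comm.mp h1, one_mul]
  have hsym : ∀ i j, X2 j i = X2 i j := fun i j => (starRingEnd ℂ).injective (by
    have := Matrix.ext_iff.2 hH i j
    simpa [Matrix.conjTranspose_apply, Matrix.map_apply] using this)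
  obtain ⟨a, b, c, b', d, e, c', e', f, hX2⟩ :
    ∃ a b c b' d e c' e' f, X2 = !![a,b,c;b',d,e;c',e',f] :=
    ⟨_, _, _, _, _, _, _, _, _, Matrix.eta_fin_three X2⟩
  have hb' : b' = b := by simpa [hX2] using hsym 0 1
  have hc' : c' = c := by simpa [hX2] using hsym 0 2
  have he' : e' = e := by simpa [hX2] using hsym 1 2
  subst hb' hc' he' hX2
  clear hH hsym h1
  rw [xmap, ← Matrix.ext_iff] at h3
  rw [← Matrix.ext_iff] at h2
  have t00 := h3 0 0
  have t01 := h3 0 1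
  have t22 := h3 2 2
  have u00 := h2 0 0
  have u01 := h2 0 1
  have u10 := h2 1 0
  have u11 := h2 1 1
  have u22 := h2 2 2
  simp [Xcp4, Matrix.mul_apply, Matrix.map_apply, Matrix.one_apply,
    Fin.sum_univ_three] at t00 t01 t22 u00 u01 u10 u11 u22
  have hc : c' = 0 := mul_self_eq_zero.mp (by linear_combination t00)
  subst hc
  have hf : f = 1 ∨ f = -1 := mul_self_eq_one_iff.mp (by linear_combination t22)
  have hff : f * (starRingEnd ℂ) f = 1 := by rcases hf with rfl | rfl <;> simp
  have he : e' = 0 := by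
    have h0 : e' * (starRingEnd ℂ) e' = 0 := by linear_combination u22 - hff
    rw [Complex.mul_conj] at h0
    exact Complex.normSq_eq_zero.mp (by exact_mod_cast h0)
  subst he
  obtain ⟨α, φ, ha, hb, hd⟩ := class1 a b' d (by linear_combination u00)
    (by linear_combination u01) (by linear_combination u10) (by linear_combination u11)
    (by linear_combination t01)
  rcases hf with rfl | rfl
  · refine ⟨α, φ, 1, Or.inl rfl, ?_⟩
    rw [ha, hb, hd]; norm_num
  · refine ⟨α, φ, -1, Or.inr rfl, ?_⟩
    rw [ha, hb, hd]; norm_num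

private lemma fwd2 (X2 : Matrix (Fin 3) (Fin 3) ℂ) (h1 : X2 * X2ᴴ = 1)
    (h2 : X2 * X2.map (starRingEnd ℂ) = 1)
    (h3 : X2 * Xcp4.map (starRingEnd ℂ) * X2 = Xcp4ᵀ) :
    ∃ α φ ε : ℝ, (ε = 1 ∨ ε = -1) ∧
      X2 = !![Complex.exp (I * α) * Real.cos φ, (Real.sin φ : ℂ), 0;
              (Real.sin φ : ℂ), -(Complex.exp (-(I * α)) * Real.cos φ), 0;
              0, 0, (ε : ℂ)] := by
  have hH : X2ᴴ = X2.map (starRingEnd ℂ) := by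
    calc X2ᴴ = X2ᴴ * (X2 * X2.map (starRingEnd ℂ)) := by rw [h2, mul_one]
    _ = (X2ᴴ * X2) * X2.map (starRingEnd ℂ) := by rw [mul_assoc]
    _ = X2.map (starRingEnd ℂ) := by rw [mul_eq_one_comm.mp h1, one_mul]
  have hsym : ∀ i j, X2 j i = X2 i j := fun i j => (starRingEnd ℂ).injective (by
    have := Matrix.ext_iff.2 hH i j
    simpa [Matrix.conjTranspose_apply, Matrix.map_apply] using this)
  obtain ⟨a, b, c, b', d, e, c', e', f, hX2⟩ :
    ∃ a b c b' d e c' e' f, X2 = !![a,b,c;b',d,e;c',e',f] :=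
    ⟨_, _, _, _, _, _, _, _, _, Matrix.eta_fin_three X2⟩
  have hb' : b' = b := by simpa [hX2] using hsym 0 1
  have hc' : c' = c := by simpa [hX2] using hsym 0 2
  have he' : e' = e := by simpa [hX2] using hsym 1 2
  subst hb' hc' he' hX2
  clear hH hsym h1
  rw [xmap, ← Matrix.ext_iff] at h3
  rw [← Matrix.ext_iff] at h2
  have t00 := h3 0 0
  have t01 := h3 0 1
  have t22 := h3 2 2
  have u00 := h2 0 0
  have u01 := h2 0 1
  have u10 := h2 1 0
  have u11 := h2 1 1
  have u22 := h2 2 2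
  simp [Xcp4, Matrix.transpose_apply, Matrix.mul_apply, Matrix.map_apply, Matrix.one_apply,
    Fin.sum_univ_three] at t00 t01 t22 u00 u01 u10 u11 u22
  have hc : c' = 0 := mul_self_eq_zero.mp (by linear_combination t00)
  subst hc
  have hf : f = 1 ∨ f = -1 := mul_self_eq_one_iff.mp (by linear_combination t22)
  have hff : f * (starRingEnd ℂ) f = 1 := by rcases hf with rfl | rfl <;> simp
  have he : e' = 0 := by
    have h0 : e' * (starRingEnd ℂ) e' = 0 := by linear_combination u22 - hff
    rw [Complex.mul_conj] at h0
    exact Complex.normSq_eq_zero.mp (by exact_mod_cast h0)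
  subst he
  obtain ⟨α, φ, ha, hb, hd⟩ := class2 a b' d (by linear_combination u00)
    (by linear_combination u01) (by linear_combination u10) (by linear_combination u11)
    (by linear_combination t01)
  rcases hf with rfl | rfl
  · refine ⟨α, φ, 1, Or.inl rfl, ?_⟩
    rw [ha, hb, hd]; norm_num
  · refine ⟨α, φ, -1, Or.inr rfl, ?_⟩
    rw [ha, hb, hd]; norm_num

/-- Classification of CP2 transformations commuting (respectively anticommuting) with CP4:
a unitary `X₂` with `X₂·conj X₂ = 1` satisfies `X₂·conj(X)·X₂ = X` iff it is of the form
`[[e^{iα}cos φ, i sin φ, 0],[i sin φ, e^{−iα}cos φ, 0],[0,0,±1]]`, and it satisfies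
`X₂·conj(X)·X₂ = Xᵀ` iff it is of the form
`[[e^{iα}cos φ, sin φ, 0],[sin φ, −e^{−iα}cos φ, 0],[0,0,±1]]`. -/
theorem cp2_commuting_with_cp4_classification (X2 : Matrix (Fin 3) (Fin 3) ℂ) :
    ((X2 * X2ᴴ = 1 ∧ X2 * X2.map (starRingEnd ℂ) = 1 ∧
        X2 * Xcp4.map (starRingEnd ℂ) * X2 = Xcp4) ↔
      ∃ α φ ε : ℝ, (ε = 1 ∨ ε = -1) ∧
        X2 = !![Complex.exp (I * α) * Real.cos φ, I * Real.sin φ, 0;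
                I * Real.sin φ, Complex.exp (-(I * α)) * Real.cos φ, 0;
                0, 0, (ε : ℂ)]) ∧
    ((X2 * X2ᴴ = 1 ∧ X2 * X2.map (starRingEnd ℂ) = 1 ∧
        X2 * Xcp4.map (starRingEnd ℂ) * X2 = Xcp4ᵀ) ↔
      ∃ α φ ε : ℝ, (ε = 1 ∨ ε = -1) ∧
        X2 = !![Complex.exp (I * α) * Real.cos φ, (Real.sin φ : ℂ), 0;
                (Real.sin φ : ℂ), -(Complex.exp (-(I * α)) * Real.cos φ), 0;
                0, 0, (ε : ℂ)]) := by
  constructor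
  · constructor
    · rintro ⟨h1, h2, h3⟩
      exact fwd1 X2 h1 h2 h3
    · rintro ⟨α, φ, ε, hε, rfl⟩
      obtain ⟨hu, hx⟩ := bwd1 α φ ε hε
      refine ⟨?_, hu, hx⟩
      have hH : (!![Complex.exp (I * α) * Real.cos φ, I * Real.sin φ, 0;
          I * Real.sin φ, Complex.exp (-(I * α)) * Real.cos φ, 0;
          0, 0, (ε : ℂ)] : Matrix (Fin 3) (Fin 3) ℂ)ᴴ =
          (!![Complex.exp (I * α) * Real.cos φ, I * Real.sin φ, 0;
          I * Real.sin φ, Complex.exp (-(I * α)) * Real.cos φ, 0;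
          0, 0, (ε : ℂ)]).map (starRingEnd ℂ) := by
        ext i j
        fin_cases i <;> fin_cases j <;>
          simp [Matrix.conjTranspose_apply, Matrix.map_apply, Matrix.vecHead, Matrix.vecTail]
      rw [hH]; exact hu
  · constructor
    · rintro ⟨h1, h2, h3⟩
      exact fwd2 X2 h1 h2 h3
    · rintro ⟨α, φ, ε, hε, rfl⟩
      obtain ⟨hu, hx⟩ := bwd2 α φ ε hε
      refine ⟨?_, hu, hx⟩
      have hH : (!![Complex.exp (I * α) * Real.cos φ, (Real.sin φ : ℂ), 0;
          (Real.sin φ : ℂ), -(Complex.exp (-(I * α)) * Real.cos φ), 0;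
          0, 0, (ε : ℂ)] : Matrix (Fin 3) (Fin 3) ℂ)ᴴ =
          (!![Complex.exp (I * α) * Real.cos φ, (Real.sin φ : ℂ), 0;
          (Real.sin φ : ℂ), -(Complex.exp (-(I * α)) * Real.cos φ), 0;
          0, 0, (ε : ℂ)]).map (starRingEnd ℂ) := by
        ext i j
        fin_cases i <;> fin_cases j <;>
          simp [Matrix.conjTranspose_apply, Matrix.map_apply, Matrix.vecHead, Matrix.vecTail]
      rw [hH]; exact hu
end
end
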